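/- arXiv:2210.00225 — 5 statements merged into one kernel-verified Lean document; each statement's English description precedes it below -/
import Mathlib

section
/- If φ = (φ_1,…,φ_N) and ψ = (ψ_1,…,ψ_N) are two solutions of the Schrödinger system for the same continuous cost c and the same family (μ_1,…,μ_N) of Borel probability measures, then there exist real constants κ_1,…,κ_N with Σ_{i=1}^N κ_i = 0 such that ψ_i(x_i) = φ_i(x_i) + κ_i for every i and every x_i ∈ X_i. -/
open MeasureTheory Set

noncomputable section

/-- `φ = (φ_1,…,φ_N)` is a solution of the Schrödinger system for the cost `c` and the
marginals `μ = (μ_1,…,μ_N)`: each `φ i` is continuous on `X i` and the Schrödinger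
equations hold at every point of `X i`. (Since each `μ j` is a probability measure
concentrated on `X j`, integrating over the full product measure `Measure.pi μ` an
integrand that does not depend on the `i`-th coordinate is the same as integrating
over `⊗_{j≠i} μ j`.) -/
def IsSchrodingerSolution {N d : ℕ} (X : Fin N → Set (EuclideanSpace ℝ (Fin d)))
    (c : (Fin N → EuclideanSpace ℝ (Fin d)) → ℝ)
    (μ : Fin N → MeasureTheory.Measure (EuclideanSpace ℝ (Fin d)))
    (φ : Fin N → EuclideanSpace ℝ (Fin d) → ℝ) : Prop :=
  (∀ i, ContinuousOn (φ i) (X i)) ∧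
  ∀ i : Fin N, ∀ xi ∈ X i,
    φ i xi = - Real.log (∫ y, Real.exp ((∑ j ∈ Finset.univ.erase i, φ j (y j))
      - c (Function.update y i xi)) ∂(MeasureTheory.Measure.pi μ))

/-!
A solution `φ` turns `P_φ y = exp (∑ j, φ j (y j) - c y)` into the density, with respect to
`⊗ μ_j`, of a coupling of the `μ_j`, and `P_ψ = P_φ exp D` with `D y = ∑ j, (ψ j - φ j) (y j)`.
As `D` is a sum of functions of single coordinates and both couplings have the same marginals,
`∫ D (P_ψ - P_φ) = 0`; but the integrand `D (exp D - 1) P_φ` is nonnegative, so `D = 0` almost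
everywhere. By Fubini each `ψ j - φ j` is then almost everywhere a constant `κ j`, with
`∑ j, κ j = 0`, and the Schrödinger equation for `ψ i` carries this to every point of `X i`.
-/

open Function Real

theorem Fintype.sum_apply_update {ι α M : Type*} [Fintype ι] [DecidableEq ι] [AddCommMonoid M]
    (f : ι → α → M) (y : ι → α) (i : ι) (t : α) :
    ∑ j, f j (update y i t j) = f i t + ∑ j ∈ Finset.univ.erase i, f j (y j) := by
  rw [← Finset.add_sum_erase _ _ (Finset.mem_univ i), update_self]
  congr 1
  exact Finset.sum_congr rfl fun j hj => by rw [update_of_ne (Finset.ne_of_mem_erase hj)]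

theorem Real.mul_exp_sub_one_nonneg (x : ℝ) : 0 ≤ x * (exp x - 1) := by
  rcases le_total 0 x with hx | hx
  · exact mul_nonneg hx (sub_nonneg.2 (one_le_exp hx))
  · exact mul_nonneg_of_nonpos_of_nonpos hx (sub_nonpos.2 (exp_le_one_iff.2 hx))

theorem Real.mul_exp_sub_one_eq_zero_iff {x : ℝ} : x * (exp x - 1) = 0 ↔ x = 0 := by
  rw [mul_eq_zero, sub_eq_zero, exp_eq_one_iff, or_self]

theorem ContinuousOn.comp_eval {ι E F : Type*} [TopologicalSpace E] [TopologicalSpace F]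
    {X : ι → Set E} {f : E → F} {j : ι} (hf : ContinuousOn f (X j)) :
    ContinuousOn (fun y : ι → E => f (y j)) (univ.pi X) :=
  hf.comp (continuous_apply j).continuousOn fun _ hy => hy j (mem_univ j)

theorem ContinuousOn.integrable_of_ae_mem {β F : Type*} [TopologicalSpace β] [T2Space β]
    [MeasurableSpace β] [OpensMeasurableSpace β] [NormedAddCommGroup F] {ν : Measure β}
    [IsFiniteMeasure ν] {K : Set β} {f : β → F} (hf : ContinuousOn f K) (hK : IsCompact K)
    (hνK : ∀ᵐ x ∂ν, x ∈ K) : Integrable f ν := by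
  rw [← Measure.restrict_eq_self_of_ae_mem hνK]
  exact hf.integrableOn_compact hK

namespace MeasureTheory

section Pi

variable {ι α : Type*} [Fintype ι] [MeasurableSpace α] {μ : ι → Measure α}

theorem Measure.ae_mem_univ_pi [∀ j, SigmaFinite (μ j)] {X : ι → Set α}
    (h : ∀ j, ∀ᵐ t ∂μ j, t ∈ X j) : ∀ᵐ y ∂Measure.pi μ, y ∈ univ.pi X :=
  (ae_all_iff.2 fun j => tendsto_eval_ae_ae.eventually (h j)).mono fun _ hy => mem_univ_pi.2 hy

theorem integral_sum_comp_eval [∀ j, IsProbabilityMeasure (μ j)] {f : ι → α → ℝ}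
    (hf : ∀ j, Integrable (f j) (μ j)) :
    ∫ y, ∑ j, f j (y j) ∂Measure.pi μ = ∑ j, ∫ t, f j t ∂μ j := by
  rw [integral_finsetSum _ fun j _ => integrable_comp_eval (hf j)]
  exact Finset.sum_congr rfl fun j _ => integral_comp_eval (hf j).aestronglyMeasurable

variable [DecidableEq ι]

theorem measurePreserving_update_pi [∀ j, SigmaFinite (μ j)] (i : ι)
    [IsProbabilityMeasure (μ i)] :
    MeasurePreserving (fun p : α × (ι → α) => update p.2 i p.1) ((μ i).prod (Measure.pi μ))
      (Measure.pi μ) := by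
  have hmeas : Measurable fun p : α × (ι → α) => update p.2 i p.1 := by fun_prop
  refine ⟨hmeas, (Measure.pi_eq fun s hs => ?_).symm⟩
  have hpre : (fun p : α × (ι → α) => update p.2 i p.1) ⁻¹' univ.pi s
      = s i ×ˢ univ.pi (update s i univ) := by
    ext ⟨t, y⟩
    simp only [mem_preimage, mem_prod, mem_univ_pi, update]
    grind
  rw [Measure.map_apply hmeas (.univ_pi hs), hpre, Measure.prod_prod, Measure.pi_pi,
    ← Finset.mul_prod_erase _ _ (Finset.mem_univ i),
    ← Finset.mul_prod_erase _ _ (Finset.mem_univ i), update_self, measure_univ, one_mul]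
  exact congrArg _ (Finset.prod_congr rfl fun j hj => by
    rw [update_of_ne (Finset.ne_of_mem_erase hj)])

theorem integral_eq_integral_integral_update [∀ j, SigmaFinite (μ j)] (i : ι)
    [IsProbabilityMeasure (μ i)] {G : Type*} [NormedAddCommGroup G] [NormedSpace ℝ G]
    {g : (ι → α) → G} (hg : Integrable g (Measure.pi μ)) :
    ∫ y, g y ∂Measure.pi μ = ∫ t, ∫ y, g (update y i t) ∂Measure.pi μ ∂μ i := by
  have h := measurePreserving_update_pi (μ := μ) i
  calc ∫ y, g y ∂Measure.pi μ = ∫ p, g (update p.2 i p.1) ∂(μ i).prod (Measure.pi μ) := by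
        rw [← integral_map h.measurable.aemeasurable (by rw [h.map_eq]; exact hg.1), h.map_eq]
    _ = _ := integral_prod _ (h.integrable_comp_of_integrable hg)

theorem ae_ae_update_of_ae [∀ j, SigmaFinite (μ j)] (i : ι) [IsProbabilityMeasure (μ i)]
    {p : (ι → α) → Prop} (h : ∀ᵐ y ∂Measure.pi μ, p y) :
    ∀ᵐ t ∂μ i, ∀ᵐ y ∂Measure.pi μ, p (update y i t) :=
  Measure.ae_ae_of_ae_prod ((measurePreserving_update_pi i).quasiMeasurePreserving.ae h)

theorem exists_ae_eq_const_of_sum_comp_eval_ae_eq_zero [∀ j, IsProbabilityMeasure (μ j)]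
    {f : ι → α → ℝ} (hf : ∀ j, Integrable (f j) (μ j))
    (h : ∀ᵐ y ∂Measure.pi μ, ∑ j, f j (y j) = 0) :
    ∃ a : ι → ℝ, ∑ j, a j = 0 ∧ ∀ j, ∀ᵐ t ∂μ j, f j t = a j := by
  have hsum : ∑ j, ∫ t, f j t ∂μ j = 0 := by
    rw [← integral_sum_comp_eval hf]
    exact integral_eq_zero_of_ae h
  refine ⟨fun j => ∫ t, f j t ∂μ j, hsum, fun i => ?_⟩
  filter_upwards [ae_ae_update_of_ae i h] with t ht
  have hfibre : f i t + ∑ j ∈ Finset.univ.erase i, ∫ s, f j s ∂μ j = 0 := by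
    calc f i t + ∑ j ∈ Finset.univ.erase i, ∫ s, f j s ∂μ j
        = ∫ y, ∑ j, f j (update y i t j) ∂Measure.pi μ := by
          simp_rw [Fintype.sum_apply_update]
          rw [integral_add (integrable_const _)
              (integrable_finsetSum _ fun j _ => integrable_comp_eval (hf j)),
            integral_finsetSum _ fun j _ => integrable_comp_eval (hf j), integral_const,
            probReal_univ, one_smul]
          exact congrArg _ (Finset.sum_congr rfl fun j _ =>
            (integral_comp_eval (hf j).aestronglyMeasurable).symm)
      _ = 0 := integral_eq_zero_of_ae ht
  linarith [Finset.add_sum_erase Finset.univ (fun j => ∫ s, f j s ∂μ j) (Finset.mem_univ i)]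

end Pi

/-- The fibre condition says that `P • Measure.pi μ` has `i`-th marginal `μ i` for every `i`. -/
def IsCouplingDensity {ι α : Type*} [Fintype ι] [DecidableEq ι] [MeasurableSpace α]
    (μ : ι → Measure α) (P : (ι → α) → ℝ) : Prop :=
  ∀ i, ∀ᵐ t ∂μ i, ∫ y, P (update y i t) ∂Measure.pi μ = 1

namespace IsCouplingDensity

variable {ι α : Type*} [Fintype ι] [DecidableEq ι] [MeasurableSpace α] {μ : ι → Measure α}
  [∀ j, IsProbabilityMeasure (μ j)] {P : (ι → α) → ℝ} {η : ι → α → ℝ}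

theorem integral_comp_eval_mul (hP : IsCouplingDensity μ P) (i : ι) {q : α → ℝ}
    (hq : Integrable (fun y => q (y i) * P y) (Measure.pi μ)) :
    ∫ y, q (y i) * P y ∂Measure.pi μ = ∫ t, q t ∂μ i := by
  rw [integral_eq_integral_integral_update i hq]
  refine integral_congr_ae ?_
  filter_upwards [hP i] with t ht
  simp only [update_self]
  rw [integral_const_mul, ht, mul_one]

theorem integral_sum_comp_eval_mul (hP : IsCouplingDensity μ P)
    (hη : ∀ j, Integrable (fun y => η j (y j) * P y) (Measure.pi μ)) :
    ∫ y, (∑ j, η j (y j)) * P y ∂Measure.pi μ = ∑ j, ∫ t, η j t ∂μ j := by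
  simp_rw [Finset.sum_mul]
  rw [integral_finsetSum _ fun j _ => hη j]
  exact Finset.sum_congr rfl fun j _ => hP.integral_comp_eval_mul j (hη j)

theorem sum_comp_eval_ae_eq_zero_of_mul_exp (hP : IsCouplingDensity μ P)
    (hQ : IsCouplingDensity μ fun y => P y * exp (∑ j, η j (y j)))
    (hPpos : ∀ᵐ y ∂Measure.pi μ, 0 < P y)
    (hPint : ∀ j, Integrable (fun y => η j (y j) * P y) (Measure.pi μ))
    (hQint : ∀ j, Integrable (fun y => η j (y j) * (P y * exp (∑ k, η k (y k))))
      (Measure.pi μ)) :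
    ∀ᵐ y ∂Measure.pi μ, ∑ j, η j (y j) = 0 := by
  set D : (ι → α) → ℝ := fun y => ∑ j, η j (y j)
  have hDint : ∀ R : (ι → α) → ℝ, (∀ j, Integrable (fun y => η j (y j) * R y) (Measure.pi μ)) →
      Integrable (fun y => D y * R y) (Measure.pi μ) := fun R hR => by
    simp_rw [D, Finset.sum_mul]
    exact integrable_finsetSum _ fun j _ => hR j
  have hfactor : ∀ y, D y * (P y * exp (D y)) - D y * P y = P y * (D y * (exp (D y) - 1)) :=
    fun y => by ring
  have hzero : ∫ y, P y * (D y * (exp (D y) - 1)) ∂Measure.pi μ = 0 := by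
    simp_rw [← hfactor]
    rw [integral_sub (hDint _ hQint) (hDint _ hPint), hQ.integral_sum_comp_eval_mul hQint,
      hP.integral_sum_comp_eval_mul hPint, sub_self]
  have hnonneg : 0 ≤ᵐ[Measure.pi μ] fun y => P y * (D y * (exp (D y) - 1)) := by
    filter_upwards [hPpos] with y hy
    exact mul_nonneg hy.le (mul_exp_sub_one_nonneg _)
  have hint : Integrable (fun y => P y * (D y * (exp (D y) - 1))) (Measure.pi μ) := by
    simp_rw [← hfactor]
    exact (hDint _ hQint).sub (hDint _ hPint)
  filter_upwards [(integral_eq_zero_iff_of_nonneg_ae hnonneg hint).1 hzero, hPpos] with y hy hPy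
  exact mul_exp_sub_one_eq_zero_iff.1 ((mul_eq_zero.1 hy).resolve_left hPy.ne')

end IsCouplingDensity

end MeasureTheory

section SchrodingerDensity

variable {ι E : Type*} [Fintype ι]

def schrodingerDensity (c : (ι → E) → ℝ) (φ : ι → E → ℝ) (y : ι → E) : ℝ :=
  exp (∑ j, φ j (y j) - c y)

theorem continuousOn_schrodingerDensity [TopologicalSpace E] {X : ι → Set E}
    {c : (ι → E) → ℝ} {φ : ι → E → ℝ} (hc : ContinuousOn c (univ.pi X))
    (hφ : ∀ j, ContinuousOn (φ j) (X j)) :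
    ContinuousOn (schrodingerDensity c φ) (univ.pi X) :=
  continuous_exp.comp_continuousOn
    ((continuousOn_finsetSum _ fun j _ => (hφ j).comp_eval).sub hc)

theorem schrodingerDensity_eq_mul_exp (c : (ι → E) → ℝ) (φ ψ : ι → E → ℝ) (y : ι → E) :
    schrodingerDensity c ψ y
      = schrodingerDensity c φ y * exp (∑ j, (ψ j (y j) - φ j (y j))) := by
  rw [schrodingerDensity, schrodingerDensity, ← exp_add, Finset.sum_sub_distrib]
  ring_nf

end SchrodingerDensity

namespace IsSchrodingerSolution

variable {N d : ℕ} {X : Fin N → Set (EuclideanSpace ℝ (Fin d))}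
  {c : (Fin N → EuclideanSpace ℝ (Fin d)) → ℝ} {μ : Fin N → Measure (EuclideanSpace ℝ (Fin d))}
  [∀ j, IsProbabilityMeasure (μ j)] {φ ψ : Fin N → EuclideanSpace ℝ (Fin d) → ℝ}

/-- Integrability makes the integral positive, which excludes the junk value `log 0 = 0`. -/
theorem integral_exp_eq (hφ : IsSchrodingerSolution X c μ φ) (hX : ∀ j, IsCompact (X j))
    (hc : ContinuousOn c (univ.pi X)) (hμX : ∀ j, ∀ᵐ t ∂μ j, t ∈ X j) {i : Fin N}
    {t : EuclideanSpace ℝ (Fin d)} (ht : t ∈ X i) :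
    ∫ y, exp ((∑ j ∈ Finset.univ.erase i, φ j (y j)) - c (update y i t)) ∂Measure.pi μ
      = exp (-φ i t) := by
  have hint : Integrable (fun y => exp ((∑ j ∈ Finset.univ.erase i, φ j (y j))
      - c (update y i t))) (Measure.pi μ) := by
    refine ContinuousOn.integrable_of_ae_mem ?_ (isCompact_univ_pi hX)
      (Measure.ae_mem_univ_pi hμX)
    exact continuous_exp.comp_continuousOn
      ((continuousOn_finsetSum _ fun j _ => (hφ.1 j).comp_eval).sub
        (hc.comp (by fun_prop) fun y hy => (update_mem_pi_iff_of_mem hy).2 fun _ => ht))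
  rw [hφ.2 i t ht, neg_neg, exp_log (integral_exp_pos hint)]

theorem isCouplingDensity (hφ : IsSchrodingerSolution X c μ φ) (hX : ∀ j, IsCompact (X j))
    (hc : ContinuousOn c (univ.pi X)) (hμX : ∀ j, ∀ᵐ t ∂μ j, t ∈ X j) :
    IsCouplingDensity μ (schrodingerDensity c φ) := fun i => by
  filter_upwards [hμX i] with t ht
  simp_rw [schrodingerDensity, Fintype.sum_apply_update, add_sub_assoc, exp_add]
  rw [integral_const_mul, hφ.integral_exp_eq hX hc hμX ht, ← exp_add, add_neg_cancel, exp_zero]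

theorem sum_sub_ae_eq_zero (hφ : IsSchrodingerSolution X c μ φ)
    (hψ : IsSchrodingerSolution X c μ ψ) (hX : ∀ j, IsCompact (X j))
    (hc : ContinuousOn c (univ.pi X)) (hμX : ∀ j, ∀ᵐ t ∂μ j, t ∈ X j) :
    ∀ᵐ y ∂Measure.pi μ, ∑ j, (ψ j (y j) - φ j (y j)) = 0 := by
  have hint : ∀ θ, IsSchrodingerSolution X c μ θ → ∀ j,
      Integrable (fun y => (ψ j (y j) - φ j (y j)) * schrodingerDensity c θ y) (Measure.pi μ) :=
    fun θ hθ j => (((hψ.1 j).comp_eval.sub (hφ.1 j).comp_eval).mul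
      (continuousOn_schrodingerDensity hc hθ.1)).integrable_of_ae_mem (isCompact_univ_pi hX)
        (Measure.ae_mem_univ_pi hμX)
  have hrel := funext (schrodingerDensity_eq_mul_exp c φ ψ)
  refine (hφ.isCouplingDensity hX hc hμX).sum_comp_eval_ae_eq_zero_of_mul_exp
    (η := fun j t => ψ j t - φ j t) ?_ (ae_of_all _ fun y => exp_pos _) (hint φ hφ) ?_
  · rw [← hrel]
    exact hψ.isCouplingDensity hX hc hμX
  · simpa only [hrel] using hint ψ hψ

theorem eq_add_of_ae_sub_eq (hφ : IsSchrodingerSolution X c μ φ)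
    (hψ : IsSchrodingerSolution X c μ ψ) (hX : ∀ j, IsCompact (X j))
    (hc : ContinuousOn c (univ.pi X)) (hμX : ∀ j, ∀ᵐ t ∂μ j, t ∈ X j) {a : Fin N → ℝ}
    (ha : ∀ j, ∀ᵐ t ∂μ j, ψ j t - φ j t = a j) (hsum : ∑ j, a j = 0) {i : Fin N}
    {x : EuclideanSpace ℝ (Fin d)} (hx : x ∈ X i) :
    ψ i x = φ i x + a i := by
  have hae : ∀ᵐ y ∂Measure.pi μ, ∀ j, ψ j (y j) = φ j (y j) + a j :=
    ae_all_iff.2 fun j => Measure.tendsto_eval_ae_ae.eventually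
      ((ha j).mono fun _ => sub_eq_iff_eq_add'.1)
  have h : exp (-ψ i x) = exp (∑ j ∈ Finset.univ.erase i, a j) * exp (-φ i x) := by
    rw [← hψ.integral_exp_eq hX hc hμX hx, ← hφ.integral_exp_eq hX hc hμX hx,
      ← integral_const_mul]
    refine integral_congr_ae ?_
    filter_upwards [hae] with y hy
    simp only [hy, Finset.sum_add_distrib, ← exp_add]
    ring_nf
  rw [← exp_add, exp_eq_exp] at h
  linarith [Finset.add_sum_erase Finset.univ a (Finset.mem_univ i)]

end IsSchrodingerSolution

theorem schrodinger_system_uniqueness_general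
    (N d : ℕ)
    (X : Fin N → Set (EuclideanSpace ℝ (Fin d)))
    (hXcpt : ∀ i, IsCompact (X i))
    (c : (Fin N → EuclideanSpace ℝ (Fin d)) → ℝ)
    (hc : ContinuousOn c (Set.univ.pi X))
    (μ : Fin N → Measure (EuclideanSpace ℝ (Fin d)))
    (hμp : ∀ i, IsProbabilityMeasure (μ i)) (hμs : ∀ i, μ i (X i) = 1)
    (φ ψ : Fin N → EuclideanSpace ℝ (Fin d) → ℝ)
    (hφ : IsSchrodingerSolution X c μ φ) (hψ : IsSchrodingerSolution X c μ ψ) :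
    ∃ κ : Fin N → ℝ, (∑ i, κ i) = 0 ∧
      ∀ i : Fin N, ∀ xi ∈ X i, ψ i xi = φ i xi + κ i := by
  have hμX : ∀ j, ∀ᵐ t ∂μ j, t ∈ X j := fun j =>
    (ae_mem_iff_measure_eq (hXcpt j).measurableSet.nullMeasurableSet).2 (by
      rw [hμs j, measure_univ])
  have hη : ∀ j, Integrable (fun t => ψ j t - φ j t) (μ j) := fun j =>
    ((hψ.1 j).sub (hφ.1 j)).integrable_of_ae_mem (hXcpt j) (hμX j)
  obtain ⟨κ, hκsum, hκ⟩ := exists_ae_eq_const_of_sum_comp_eval_ae_eq_zero hη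
    (hφ.sum_sub_ae_eq_zero hψ hXcpt hc hμX)
  exact ⟨κ, hκsum, fun i x hx => hφ.eq_add_of_ae_sub_eq hψ hXcpt hc hμX hκ hκsum hx⟩

/-- Two solutions of the Schrödinger system for the same continuous cost
and the same marginals coincide on the sets `X_i` up to additive constants summing to zero. -/
theorem schrodinger_system_uniqueness
    (N d : ℕ) (hN : 2 ≤ N) (hd : 1 ≤ d)
    (X : Fin N → Set (EuclideanSpace ℝ (Fin d)))
    (hXne : ∀ i, (X i).Nonempty) (hXcpt : ∀ i, IsCompact (X i)) (hXcvx : ∀ i, Convex ℝ (X i))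
    (c : (Fin N → EuclideanSpace ℝ (Fin d)) → ℝ)
    (hc : ContinuousOn c (Set.univ.pi X))
    (μ : Fin N → Measure (EuclideanSpace ℝ (Fin d)))
    (hμp : ∀ i, IsProbabilityMeasure (μ i)) (hμs : ∀ i, μ i (X i) = 1)
    (φ ψ : Fin N → EuclideanSpace ℝ (Fin d) → ℝ)
    (hφ : IsSchrodingerSolution X c μ φ) (hψ : IsSchrodingerSolution X c μ ψ) :
    ∃ κ : Fin N → ℝ, (∑ i, κ i) = 0 ∧
      ∀ i : Fin N, ∀ xi ∈ X i, ψ i xi = φ i xi + κ i :=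
  schrodinger_system_uniqueness_general N d X hXcpt c hc μ hμp hμs φ ψ hφ hψ
end
end

section
/- Suppose the cost c is the restriction to X of a continuously differentiable function c̃ on (ℝ^d)^N and let L_i := sup_{x∈X} ‖∇_{x_i} c̃(x)‖₂. Then for every family (μ_1,…,μ_N) of Borel probability measures and every solution φ = (φ_1,…,φ_N) of the Schrödinger system for (c,(μ_1,…,μ_N)), the function φ_i is L_i-Lipschitz on X_i for every i, i.e. |φ_i(x_i) − φ_i(x_i')| ≤ L_i‖x_i − x_i'‖ for all x_i, x_i' ∈ X_i. -/
/-! Each potential is minus a log-partition function,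
`φ_i(x_i) = -log ∫ exp (Σ_{j≠i} φ_j(y_j) - c(x_i, y_{-i})) dμ(y)`, and `log ∫ exp` is 1-Lipschitz
for the essential sup norm of the exponent. Since `μ` is carried by the product `X`, it suffices
that on `X` moving `x_i` to `x_i'` changes `c` by at most `L_i ‖x_i - x_i'‖`, which is the mean
value inequality for `c̃` along the convex set `X_i`. -/

open MeasureTheory Set

noncomputable section

open Function Real

section LogIntegralExp

variable {α : Type*} [MeasurableSpace α] {ν : Measure α} {f g : α → ℝ} {C : ℝ}

theorem log_integral_exp_le_add (hg : 0 < ∫ y, exp (g y) ∂ν)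
    (hf : Integrable (fun y => exp (f y)) ν) (h : ∀ᵐ y ∂ν, g y ≤ f y + C) :
    log (∫ y, exp (g y) ∂ν) ≤ log (∫ y, exp (f y) ∂ν) + C := by
  have hle : ∫ y, exp (g y) ∂ν ≤ exp C * ∫ y, exp (f y) ∂ν := by
    rw [← integral_const_mul]
    refine integral_mono_ae (.of_integral_ne_zero hg.ne') (hf.const_mul _) ?_
    filter_upwards [h] with y hy
    rw [← exp_add, add_comm]
    exact exp_le_exp.2 hy
  have hf_pos : 0 < ∫ y, exp (f y) ∂ν := pos_of_mul_pos_right (hg.trans_le hle) (exp_pos C).le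
  calc log (∫ y, exp (g y) ∂ν) ≤ log (exp C * ∫ y, exp (f y) ∂ν) := log_le_log hg hle
    _ = log (∫ y, exp (f y) ∂ν) + C := by
      rw [log_mul (exp_ne_zero C) hf_pos.ne', log_exp, add_comm]

theorem abs_log_integral_exp_sub_le (hf : 0 < ∫ y, exp (f y) ∂ν)
    (hg : 0 < ∫ y, exp (g y) ∂ν) (h : ∀ᵐ y ∂ν, |f y - g y| ≤ C) :
    |log (∫ y, exp (f y) ∂ν) - log (∫ y, exp (g y) ∂ν)| ≤ C := by
  rw [abs_sub_le_iff]
  constructor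
  · have := log_integral_exp_le_add hf (.of_integral_ne_zero hg.ne')
      (h.mono fun y hy => by linarith [le_abs_self (f y - g y)])
    linarith
  · have := log_integral_exp_le_add hg (.of_integral_ne_zero hf.ne')
      (h.mono fun y hy => by linarith [neg_abs_le (f y - g y)])
    linarith

end LogIntegralExp

theorem ae_mem_univ_pi {ι : Type*} [Fintype ι] {α : ι → Type*} [∀ i, MeasurableSpace (α i)]
    {μ : ∀ i, Measure (α i)} [∀ i, SigmaFinite (μ i)] {s : ∀ i, Set (α i)}
    (h : ∀ i, ∀ᵐ x ∂μ i, x ∈ s i) : ∀ᵐ y ∂Measure.pi μ, y ∈ univ.pi s :=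
  (Filter.eventually_all.2 fun i => Measure.tendsto_eval_ae_ae.eventually (h i)).mono
    fun _ hy i _ => hy i

theorem integral_exp_pos_of_continuousOn {α : Type*} [TopologicalSpace α] [T2Space α]
    [MeasurableSpace α] [OpensMeasurableSpace α] {ν : Measure α} [IsFiniteMeasure ν] [NeZero ν]
    {K : Set α} (hK : IsCompact K) (hνK : ∀ᵐ y ∂ν, y ∈ K) {g : α → ℝ} (hg : ContinuousOn g K) :
    0 < ∫ y, exp (g y) ∂ν := by
  have hint : IntegrableOn (fun y => exp (g y)) K ν :=
    (continuous_exp.comp_continuousOn hg).integrableOn_compact hK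
  rw [IntegrableOn, Measure.restrict_eq_self_of_ae_mem hνK] at hint
  exact integral_exp_pos hint

theorem norm_gradient {E : Type*} [NormedAddCommGroup E] [InnerProductSpace ℝ E] [CompleteSpace E]
    (g : E → ℝ) (z : E) : ‖gradient g z‖ = ‖fderiv ℝ g z‖ :=
  (InnerProductSpace.toDual ℝ E).symm.norm_map _

theorem hasFDerivAt_comp_update {ι E F : Type*} [Fintype ι] [DecidableEq ι] [NormedAddCommGroup E]
    [NormedSpace ℝ E] [NormedAddCommGroup F] [NormedSpace ℝ F] {f : (ι → E) → F} {x : ι → E}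
    {i : ι} {z : E} (hf : DifferentiableAt ℝ f (update x i z)) :
    HasFDerivAt (fun w => f (update x i w))
      (fderiv ℝ f (update x i z) ∘L .pi (Pi.single i (.id ℝ E))) z :=
  hf.hasFDerivAt.comp z (hasFDerivAt_update x z)

section PartialGradient

variable {ι E : Type*} [DecidableEq ι] [NormedAddCommGroup E] [InnerProductSpace ℝ E]
  [CompleteSpace E] {f : (ι → E) → ℝ} {i : ι}

/-- `∇_{x_i} f(x)`. -/
def partialGradient (f : (ι → E) → ℝ) (x : ι → E) (i : ι) : E :=
  gradient (fun z => f (update x i z)) (x i)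

theorem partialGradient_update (y : ι → E) (z : E) :
    partialGradient f (update y i z) i = gradient (fun w => f (update y i w)) z := by
  simp only [partialGradient, update_idem, update_self]

variable [Fintype ι]

theorem norm_partialGradient {x : ι → E} (hf : DifferentiableAt ℝ f x) :
    ‖partialGradient f x i‖ = ‖fderiv ℝ f x ∘L .pi (Pi.single i (.id ℝ E))‖ := by
  rw [← update_eq_self i x] at hf
  rw [partialGradient, norm_gradient, (hasFDerivAt_comp_update hf).fderiv, update_eq_self]

theorem continuous_norm_partialGradient (hf : ContDiff ℝ 1 f) :
    Continuous fun x => ‖partialGradient f x i‖ := by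
  simp only [norm_partialGradient (hf.differentiable one_ne_zero _)]
  exact ((hf.continuous_fderiv one_ne_zero).clm_comp continuous_const).norm

theorem abs_sub_comp_update_le (hf : ContDiff ℝ 1 f) {X : ι → Set E}
    (hX : ∀ j, IsCompact (X j)) (hXi : Convex ℝ (X i)) {y : ι → E} (hy : y ∈ univ.pi X)
    {a b : E} (ha : a ∈ X i) (hb : b ∈ X i) :
    |f (update y i a) - f (update y i b)|
      ≤ sSup ((fun x => ‖partialGradient f x i‖) '' univ.pi X) * ‖a - b‖ := by
  have hdiff : ∀ z, DifferentiableAt ℝ (fun w => f (update y i w)) z := fun z =>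
    (hasFDerivAt_comp_update (hf.differentiable one_ne_zero _)).differentiableAt
  have hbdd : BddAbove ((fun x => ‖partialGradient f x i‖) '' univ.pi X) :=
    ((isCompact_univ_pi hX).image (continuous_norm_partialGradient hf)).bddAbove
  have hbound : ∀ z ∈ X i, ‖fderiv ℝ (fun w => f (update y i w)) z‖
      ≤ sSup ((fun x => ‖partialGradient f x i‖) '' univ.pi X) := by
    intro z hz
    rw [← norm_gradient, ← partialGradient_update]
    exact le_csSup hbdd (mem_image_of_mem _ ((update_mem_pi_iff_of_mem hy).2 fun _ => hz))
  simpa only [Real.norm_eq_abs] using hXi.norm_image_sub_le_of_norm_fderiv_le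
    (fun z _ => hdiff z) hbound hb ha

end PartialGradient

theorem schrodinger_potentials_lipschitz_general
    (N d : ℕ)
    (X : Fin N → Set (EuclideanSpace ℝ (Fin d)))
    (hXcpt : ∀ i, IsCompact (X i)) (hXcvx : ∀ i, Convex ℝ (X i))
    (c ctilde : (Fin N → EuclideanSpace ℝ (Fin d)) → ℝ)
    (hct : ContDiff ℝ 1 ctilde) (hcc : Set.EqOn c ctilde (Set.univ.pi X))
    (L : Fin N → ℝ)
    (hL : ∀ i, L i = sSup ((fun x : Fin N → EuclideanSpace ℝ (Fin d) =>
      ‖gradient (fun z => ctilde (Function.update x i z)) (x i)‖) '' Set.univ.pi X))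
    (μ : Fin N → Measure (EuclideanSpace ℝ (Fin d)))
    (hμp : ∀ i, IsProbabilityMeasure (μ i)) (hμs : ∀ i, μ i (X i) = 1)
    (φ : Fin N → EuclideanSpace ℝ (Fin d) → ℝ)
    (hφ : IsSchrodingerSolution X c μ φ) :
    ∀ i : Fin N, ∀ xi ∈ X i, ∀ xi' ∈ X i,
      |φ i xi - φ i xi'| ≤ L i * ‖xi - xi'‖ := by
  intro i a ha b hb
  have hK : ∀ᵐ y ∂Measure.pi μ, y ∈ univ.pi X := ae_mem_univ_pi fun j =>
    (ae_mem_iff_measure_eq (hXcpt j).isClosed.measurableSet.nullMeasurableSet).2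
      (by rw [hμs, measure_univ])
  have hupdate : ∀ z ∈ X i, MapsTo (fun y => update y i z) (univ.pi X) (univ.pi X) :=
    fun z hz y hy => (update_mem_pi_iff_of_mem hy).2 fun _ => hz
  have hpos : ∀ z ∈ X i, 0 < ∫ y, exp (∑ j ∈ Finset.univ.erase i, φ j (y j)
      - c (update y i z)) ∂Measure.pi μ := by
    refine fun z hz => integral_exp_pos_of_continuousOn (isCompact_univ_pi hXcpt) hK (.sub ?_ ?_)
    · exact continuousOn_finsetSum _ fun j _ =>
        (hφ.1 j).comp (continuous_apply j).continuousOn fun y hy => hy j trivial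
    · exact (hct.continuous.continuousOn.congr hcc).comp
        (continuous_id.update i continuous_const).continuousOn (hupdate z hz)
  rw [hφ.2 i a ha, hφ.2 i b hb, neg_sub_neg, hL i]
  refine abs_log_integral_exp_sub_le (hpos b hb) (hpos a ha) ?_
  filter_upwards [hK] with y hy
  rw [hcc (hupdate a ha hy), hcc (hupdate b hb hy), sub_sub_sub_cancel_left]
  exact abs_sub_comp_update_le hct hXcpt (hXcvx i) hy ha hb

/-- If the cost `c` is the restriction to `X` of a `C¹` function `c̃`, and
`L_i = sup_{x ∈ X} ‖∇_{x_i} c̃(x)‖`, then every solution `φ` of the Schrödinger system has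
`φ_i` Lipschitz on `X_i` with constant `L_i`. -/
theorem schrodinger_potentials_lipschitz
    (N d : ℕ) (hN : 2 ≤ N) (hd : 1 ≤ d)
    (X : Fin N → Set (EuclideanSpace ℝ (Fin d)))
    (hXne : ∀ i, (X i).Nonempty) (hXcpt : ∀ i, IsCompact (X i)) (hXcvx : ∀ i, Convex ℝ (X i))
    (c ctilde : (Fin N → EuclideanSpace ℝ (Fin d)) → ℝ)
    (hct : ContDiff ℝ 1 ctilde) (hcc : Set.EqOn c ctilde (Set.univ.pi X))
    (L : Fin N → ℝ)
    (hL : ∀ i, L i = sSup ((fun x : Fin N → EuclideanSpace ℝ (Fin d) =>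
      ‖gradient (fun z => ctilde (Function.update x i z)) (x i)‖) '' Set.univ.pi X))
    (μ : Fin N → Measure (EuclideanSpace ℝ (Fin d)))
    (hμp : ∀ i, IsProbabilityMeasure (μ i)) (hμs : ∀ i, μ i (X i) = 1)
    (φ : Fin N → EuclideanSpace ℝ (Fin d) → ℝ)
    (hφ : IsSchrodingerSolution X c μ φ) :
    ∀ i : Fin N, ∀ xi ∈ X i, ∀ xi' ∈ X i,
      |φ i xi - φ i xi'| ≤ L i * ‖xi - xi'‖ :=
  schrodinger_potentials_lipschitz_general N d X hXcpt hXcvx c ctilde hct hcc L hL μ hμp hμs φ hφ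
end
end

section
/- Let μ_i be Borel probability measures on X_i and μ = μ_1 ⊗ ⋯ ⊗ μ_N, and let h_i ∈ L²(μ_i) for i = 1,…,N. Define the quotient norm ‖h‖²_{L̃²} := inf{ Σ_{i=1}^N ∫_{X_i} (h_i(x_i) − κ_i)² dμ_i(x_i) : κ ∈ ℝ^N, Σ_{i=1}^N κ_i = 0 }. Then ‖h‖²_{L̃²} ≤ ∫_X (Σ_{i=1}^N h_i(x_i))² dμ(x) ≤ N ‖h‖²_{L̃²}. -/
open MeasureTheory ProbabilityTheory

/-!
Write `m_i` and `v_i` for the mean and variance of `h_i` under `μ_i`. The coordinates are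
independent under the product measure, so `∫ (Σ_i h_i)² dμ = Σ_i v_i + (Σ_i m_i)²`, while
`∫ (h_i - κ_i)² dμ_i = v_i + (m_i - κ_i)²`. Minimising `Σ_i (m_i - κ_i)²` over `Σ_i κ_i = 0`
gives `(Σ_i m_i)² / N` (Cauchy–Schwarz, attained at `κ_i = m_i - (Σ_j m_j) / N`), so the
squared quotient norm is `Σ_i v_i + (Σ_i m_i)² / N`, and both inequalities are immediate.
-/

lemma memLp_two_of_lintegral_ofReal_sq_lt_top {α : Type*} [MeasurableSpace α] {μ : Measure α}
    {f : α → ℝ} (hf : AEStronglyMeasurable f μ) (hfin : ∫⁻ x, ENNReal.ofReal (f x ^ 2) ∂μ < ⊤) :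
    MemLp f 2 μ :=
  (memLp_two_iff_integrable_sq hf).2
    ⟨hf.pow 2, (hasFiniteIntegral_iff_ofReal (.of_forall fun _ => sq_nonneg _)).2 hfin⟩

lemma integral_sub_const_sq {Ω : Type*} [MeasurableSpace Ω] {μ : Measure Ω}
    [IsProbabilityMeasure μ] {f : Ω → ℝ} (hf : MemLp f 2 μ) (c : ℝ) :
    ∫ x, (f x - c) ^ 2 ∂μ = Var[f; μ] + (μ[f] - c) ^ 2 := by
  have hfc : MemLp (fun x => f x - c) 2 μ := hf.sub (memLp_const c)
  rw [← variance_sub_const hf.aestronglyMeasurable c, variance_eq_sub hfc,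
    integral_sub (hf.integrable one_le_two) (integrable_const c)]
  simp

lemma integral_sq_sum_comp_eval {ι : Type*} [Fintype ι] {α : ι → Type*}
    [∀ i, MeasurableSpace (α i)] {μ : ∀ i, Measure (α i)} [∀ i, IsProbabilityMeasure (μ i)]
    {h : ∀ i, α i → ℝ} (hh : ∀ i, MemLp (h i) 2 (μ i)) :
    ∫ x, (∑ i, h i (x i)) ^ 2 ∂(Measure.pi μ) =
      ∑ i, Var[h i; μ i] + (∑ i, ∫ x, h i x ∂(μ i)) ^ 2 := by
  have hcoord : ∀ i, MemLp (fun x : ∀ j, α j => h i (x i)) 2 (Measure.pi μ) := fun i =>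
    (hh i).comp_measurePreserving (measurePreserving_eval μ i)
  have hmean : ∫ x, ∑ i, h i (x i) ∂(Measure.pi μ) = ∑ i, ∫ x, h i x ∂(μ i) := by
    rw [integral_finsetSum _ fun i _ => (hcoord i).integrable one_le_two]
    exact Finset.sum_congr rfl fun i _ => integral_comp_eval (hh i).aestronglyMeasurable
  have hS := integral_sub_const_sq (memLp_finsetSum' Finset.univ fun i _ => hcoord i) 0
  rw [variance_sum_pi hh] at hS
  simpa only [Finset.sum_apply, sub_zero, hmean] using hS

lemma isLeast_sum_sq_sub_of_sum_eq_zero {ι : Type*} [Fintype ι] [Nonempty ι] (a : ι → ℝ) :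
    IsLeast {r | ∃ κ : ι → ℝ, ∑ i, κ i = 0 ∧ r = ∑ i, (a i - κ i) ^ 2}
      ((∑ i, a i) ^ 2 / Fintype.card ι) := by
  have hn : (0 : ℝ) < Fintype.card ι := by exact_mod_cast Fintype.card_pos
  refine ⟨⟨fun i => a i - (∑ j, a j) / Fintype.card ι, ?_, ?_⟩, ?_⟩
  · simp only [Finset.sum_sub_distrib, Finset.sum_const, Finset.card_univ, nsmul_eq_mul]
    field_simp
    ring
  · simp only [sub_sub_cancel, Finset.sum_const, Finset.card_univ, nsmul_eq_mul]
    field_simp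
  · rintro r ⟨κ, hκ, rfl⟩
    have hcs := sq_sum_le_card_mul_sum_sq (s := Finset.univ) (f := fun i => a i - κ i)
    rw [Finset.sum_sub_distrib, hκ, sub_zero, Finset.card_univ] at hcs
    rwa [div_le_iff₀ hn, mul_comm]

lemma isLeast_sum_integral_sub_sq_of_sum_eq_zero {ι : Type*} [Fintype ι] [Nonempty ι]
    {α : ι → Type*} [∀ i, MeasurableSpace (α i)] {μ : ∀ i, Measure (α i)}
    [∀ i, IsProbabilityMeasure (μ i)] {h : ∀ i, α i → ℝ} (hh : ∀ i, MemLp (h i) 2 (μ i)) :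
    IsLeast {r | ∃ κ : ι → ℝ, ∑ i, κ i = 0 ∧ r = ∑ i, ∫ x, (h i x - κ i) ^ 2 ∂(μ i)}
      (∑ i, Var[h i; μ i] + (∑ i, ∫ x, h i x ∂(μ i)) ^ 2 / Fintype.card ι) := by
  have hsplit : ∀ κ : ι → ℝ, ∑ i, ∫ x, (h i x - κ i) ^ 2 ∂(μ i) =
      ∑ i, Var[h i; μ i] + ∑ i, ((∫ x, h i x ∂(μ i)) - κ i) ^ 2 := fun κ => by
    simp only [integral_sub_const_sq (hh _), Finset.sum_add_distrib]
  obtain ⟨⟨κ, hκ, hmin⟩, hlow⟩ :=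
    isLeast_sum_sq_sub_of_sum_eq_zero fun i => ∫ x, h i x ∂(μ i)
  refine ⟨⟨κ, hκ, by rw [hsplit, hmin]⟩, ?_⟩
  rintro r ⟨κ', hκ', rfl⟩
  rw [hsplit]
  exact add_le_add_right (hlow ⟨κ', hκ', rfl⟩) _

theorem quotient_L2_norm_comparison_general
    (N d : ℕ) (hN : 2 ≤ N)
    (μ : Fin N → Measure (EuclideanSpace ℝ (Fin d)))
    (hμp : ∀ i, IsProbabilityMeasure (μ i))
    (h : Fin N → EuclideanSpace ℝ (Fin d) → ℝ)
    (hmeas : ∀ i, Measurable (h i))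
    (hL2 : ∀ i, ∫⁻ x, ENNReal.ofReal ((h i x) ^ 2) ∂(μ i) < ⊤) :
    sInf {r : ℝ | ∃ κ : Fin N → ℝ, (∑ i, κ i) = 0 ∧
        r = ∑ i, ∫ x, (h i x - κ i) ^ 2 ∂(μ i)} ≤
      ∫ x, (∑ i, h i (x i)) ^ 2 ∂(Measure.pi μ) ∧
    ∫ x, (∑ i, h i (x i)) ^ 2 ∂(Measure.pi μ) ≤
      N * sInf {r : ℝ | ∃ κ : Fin N → ℝ, (∑ i, κ i) = 0 ∧
        r = ∑ i, ∫ x, (h i x - κ i) ^ 2 ∂(μ i)} := by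
  have : NeZero N := ⟨by omega⟩
  have hh : ∀ i, MemLp (h i) 2 (μ i) := fun i =>
    memLp_two_of_lintegral_ofReal_sq_lt_top (hmeas i).aestronglyMeasurable (hL2 i)
  rw [(isLeast_sum_integral_sub_sq_of_sum_eq_zero hh).csInf_eq, integral_sq_sum_comp_eval hh,
    Fintype.card_fin]
  have hV : 0 ≤ ∑ i, Var[h i; μ i] := Finset.sum_nonneg fun i _ => variance_nonneg _ _
  have hN1 : (1 : ℝ) ≤ N := by exact_mod_cast hN.trans' one_le_two
  have hM := div_le_self (sq_nonneg (∑ i, ∫ x, h i x ∂(μ i))) hN1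
  refine ⟨by linarith, ?_⟩
  rw [mul_add, mul_div_cancel₀ _ (by positivity)]
  linarith [le_mul_of_one_le_left hV hN1]

/-- Comparison between the quotient `L²` norm of a family `(h_1,…,h_N)`
and the `L²(μ)` norm of `x ↦ Σ_i h_i(x_i)`:
`‖h‖²_{L̃²} ≤ ∫ (Σ_i h_i(x_i))² dμ ≤ N ‖h‖²_{L̃²}`. -/
theorem quotient_L2_norm_comparison
    (N d : ℕ) (hN : 2 ≤ N) (hd : 1 ≤ d)
    (X : Fin N → Set (EuclideanSpace ℝ (Fin d)))
    (hXne : ∀ i, (X i).Nonempty) (hXcpt : ∀ i, IsCompact (X i)) (hXcvx : ∀ i, Convex ℝ (X i))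
    (μ : Fin N → Measure (EuclideanSpace ℝ (Fin d)))
    (hμp : ∀ i, IsProbabilityMeasure (μ i)) (hμs : ∀ i, μ i (X i) = 1)
    (h : Fin N → EuclideanSpace ℝ (Fin d) → ℝ)
    (hmeas : ∀ i, Measurable (h i))
    (hL2 : ∀ i, ∫⁻ x, ENNReal.ofReal ((h i x) ^ 2) ∂(μ i) < ⊤) :
    sInf {r : ℝ | ∃ κ : Fin N → ℝ, (∑ i, κ i) = 0 ∧
        r = ∑ i, ∫ x, (h i x - κ i) ^ 2 ∂(μ i)} ≤
      ∫ x, (∑ i, h i (x i)) ^ 2 ∂(Measure.pi μ) ∧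
    ∫ x, (∑ i, h i (x i)) ^ 2 ∂(Measure.pi μ) ≤
      N * sInf {r : ℝ | ∃ κ : Fin N → ℝ, (∑ i, κ i) = 0 ∧
        r = ∑ i, ∫ x, (h i x - κ i) ^ 2 ∂(μ i)} :=
  quotient_L2_norm_comparison_general N d hN μ hμp h hmeas hL2
end

section
/- Let c be of class C¹ on X, let each φ_j : X_j → ℝ be of class C¹, let γ_i and cost(γ) be as in the context, and set γ_{-i} := ⊗_{j≠i} γ_j. For i ∈ {1,…,N}, t ∈ [0,1] and x_i ∈ X_i define, with the convention y_i := x_i, G_i(φ,t)(x_i) := φ_i(x_i) + log ∫_{X_{-i}×X_{-i}} exp( Σ_{j≠i} φ_j((1−t)x_j + t y_j) − c((1−t)x + t y) ) dγ_{-i}(x_{-i},y_{-i}). Then for every i and every x_i ∈ X_i the map t ↦ G_i(φ,t)(x_i) is differentiable on [0,1], and there exists C > 0, depending only on N, ‖c‖_{C¹(X)} and Σ_{j=1}^N ‖φ_j‖_{C¹(X_j)}, such that |d/dt G_i(φ,t)(x_i)| ≤ C √(cost(γ)) for every t ∈ [0,1], every i and every x_i ∈ X_i. -/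
/-!
For `t ∈ [0, 1]` the interpolated points `(1 - t) x_j + t y_j` stay in the convex sets `X_j`, so
`c` and the `φ_j` may be replaced by compactly supported `C¹` extensions whose values and
derivatives are bounded everywhere by `K = |M| + 1`. The exponent `S_t` of the integrand is then
bounded by `N K`, and by the chain rule its time derivative is bounded by `N K Σ_j ‖y_j - x_j‖`.
Differentiating under the integral sign, `d/dt log ∫ exp S_t = ∫ exp S_t · Ṡ_t / ∫ exp S_t`, whose
absolute value is at most `exp (2 N K) N K Σ_j ∫ ‖y_j - x_j‖ dγ_j`; by Jensen's inequality each of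
these integrals is at most `√cost(γ)`.
-/

open MeasureTheory Set

noncomputable section

/-- `f` is of class `C^k` on `K`: it is the restriction to `K` of a `C^k` function. -/
def IsCkOn {F : Type*} [NormedAddCommGroup F] [NormedSpace ℝ F]
    (k : ℕ) (K : Set F) (f : F → ℝ) : Prop :=
  ∃ g : F → ℝ, ContDiff ℝ k g ∧ Set.EqOn f g K

/-- The `C^k` norm of `f` on `K`: the infimum over all `C^k` extensions `g` of `f`
of the maximum over `0 ≤ j ≤ k` of the sup-norm of the `j`-th derivative of `g`. -/
noncomputable def CkNormOn {F : Type*} [NormedAddCommGroup F] [NormedSpace ℝ F]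
    (k : ℕ) (K : Set F) (f : F → ℝ) : ℝ :=
  sInf {r : ℝ | 0 ≤ r ∧ ∃ g : F → ℝ, ContDiff ℝ k g ∧ Set.EqOn f g K ∧
    ∀ j ≤ k, ∀ x, ‖iteratedFDeriv ℝ j g x‖ ≤ r}

/-- The `L²` transport cost of a family of plans: `Σ_i ∫ ‖y_i − x_i‖² dγ_i`. -/
noncomputable def transportCost {N : ℕ} {F : Type*} [NormedAddCommGroup F] [MeasurableSpace F]
    (γ : Fin N → MeasureTheory.Measure (F × F)) : ℝ :=
  ∑ i, ∫ p, ‖p.2 - p.1‖ ^ 2 ∂(γ i)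

/-- The interpolation at time `t` of a transport plan: the pushforward of `γ`
under `(x, y) ↦ (1 − t) x + t y`. -/
noncomputable def interp {F : Type*} [NormedAddCommGroup F] [Module ℝ F] [MeasurableSpace F]
    (t : ℝ) (γ : MeasureTheory.Measure (F × F)) : MeasureTheory.Measure F :=
  γ.map (fun p => (1 - t) • p.1 + t • p.2)

/-- The map `G_i(φ,t)(x_i) = φ_i(x_i) + log ∫ exp(Σ_{j≠i} φ_j((1−t)x_j + t y_j)
− c((1−t)x + t y)) dγ_{-i}`, with the convention `y_i := x_i` (so that the `i`-th
coordinate of the argument of `c` is the fixed point `x_i`). Since the integrand does not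
depend on the `i`-th pair, integrating over the full product plan `Measure.pi γ` agrees
with integrating over `γ_{-i} = ⊗_{j≠i} γ_j`. -/
noncomputable def schrodingerG {N d : ℕ}
    (c : (Fin N → EuclideanSpace ℝ (Fin d)) → ℝ)
    (γ : Fin N → Measure (EuclideanSpace ℝ (Fin d) × EuclideanSpace ℝ (Fin d)))
    (φ : Fin N → EuclideanSpace ℝ (Fin d) → ℝ)
    (i : Fin N) (t : ℝ) (xi : EuclideanSpace ℝ (Fin d)) : ℝ :=
  φ i xi + Real.log (∫ z,
    Real.exp ((∑ j ∈ Finset.univ.erase i, φ j ((1 - t) • (z j).1 + t • (z j).2)) -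
      c (Function.update (fun j => (1 - t) • (z j).1 + t • (z j).2) i xi))
    ∂(Measure.pi γ))


section Extension

variable {F : Type*} [NormedAddCommGroup F] [NormedSpace ℝ F] {k : ℕ} {K : Set F} {f : F → ℝ}

lemma ckNormOn_nonneg : 0 ≤ CkNormOn k K f :=
  Real.sInf_nonneg fun _ hr => hr.1

lemma exists_contDiff_hasCompactSupport_eqOn [FiniteDimensional ℝ F] (hK : IsCompact K)
    (hf : ContDiff ℝ k f) : ∃ g : F → ℝ, ContDiff ℝ k g ∧ HasCompactSupport g ∧ EqOn f g K := by
  obtain ⟨R, hR⟩ := hK.isBounded.subset_closedBall 0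
  let ρ : ContDiffBump (0 : F) :=
    { rIn := max R 1
      rOut := max R 1 + 1
      rIn_pos := one_pos.trans_le (le_max_right _ _)
      rIn_lt_rOut := lt_add_one _ }
  refine ⟨fun x => ρ x * f x, ρ.contDiff.mul hf, ρ.hasCompactSupport.mul_right, fun x hx => ?_⟩
  have hx' : x ∈ Metric.closedBall 0 ρ.rIn :=
    Metric.closedBall_subset_closedBall (le_max_left _ _) (hR hx)
  simp [ρ.one_of_mem_closedBall hx']

lemma exists_iteratedFDeriv_bound_eqOn [FiniteDimensional ℝ F] (hK : IsCompact K)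
    (hf : ContDiff ℝ k f) :
    ∃ r, 0 ≤ r ∧ ∃ g : F → ℝ, ContDiff ℝ k g ∧ EqOn f g K ∧
      ∀ j ≤ k, ∀ x, ‖iteratedFDeriv ℝ j g x‖ ≤ r := by
  obtain ⟨g, hg, hg_supp, hfg⟩ := exists_contDiff_hasCompactSupport_eqOn hK hf
  choose C hC using fun j : Fin (k + 1) =>
    Continuous.bounded_above_of_compact_support
      (hg.continuous_iteratedFDeriv (by exact_mod_cast Nat.lt_succ_iff.1 j.2))
      (hg_supp.iteratedFDeriv (j : ℕ))
  refine ⟨∑ j, |C j|, by positivity, g, hg, hfg, fun j hj x => ?_⟩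
  calc ‖iteratedFDeriv ℝ j g x‖ ≤ C ⟨j, Nat.lt_succ_of_le hj⟩ := by exact hC ⟨j, _⟩ x
    _ ≤ |C ⟨j, Nat.lt_succ_of_le hj⟩| := le_abs_self _
    _ ≤ ∑ j, |C j| := Finset.single_le_sum (fun j _ => abs_nonneg (C j)) (Finset.mem_univ _)

lemma exists_extension_of_ckNormOn_lt [FiniteDimensional ℝ F] (hK : IsCompact K)
    (hf : ContDiff ℝ k f) {r : ℝ} (hr : CkNormOn k K f < r) :
    ∃ g : F → ℝ, ContDiff ℝ k g ∧ EqOn f g K ∧ ∀ j ≤ k, ∀ x, ‖iteratedFDeriv ℝ j g x‖ ≤ r := by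
  obtain ⟨s, ⟨-, g, hg, hfg, hgs⟩, hsr⟩ :=
    exists_lt_of_csInf_lt (exists_iteratedFDeriv_bound_eqOn hK hf) hr
  exact ⟨g, hg, hfg, fun j hj x => (hgs j hj x).trans hsr.le⟩

lemma exists_extension_of_ckNormOn_one_lt [FiniteDimensional ℝ F] (hK : IsCompact K)
    (hf : ContDiff ℝ 1 f) {r : ℝ} (hr : CkNormOn 1 K f < r) :
    ∃ g : F → ℝ, ContDiff ℝ 1 g ∧ EqOn f g K ∧ (∀ x, |g x| ≤ r) ∧ ∀ x, ‖fderiv ℝ g x‖ ≤ r := by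
  obtain ⟨g, hg, hfg, hgr⟩ := exists_extension_of_ckNormOn_lt hK hf hr
  refine ⟨g, hg, hfg, fun x => ?_, fun x => ?_⟩
  · simpa using hgr 0 zero_le_one x
  · simpa [norm_iteratedFDeriv_one] using hgr 1 le_rfl x

end Extension

section Measures

variable {α : Type*} [MeasurableSpace α]

lemma ae_mem_prod_of_map_fst_of_map_snd {V : Type*} [MeasurableSpace V]
    {γ : Measure (V × V)} {μ₀ μ₁ : Measure V} [IsProbabilityMeasure μ₀] [IsProbabilityMeasure μ₁]
    {s t : Set V} (hs : MeasurableSet s) (ht : MeasurableSet t)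
    (h₀ : γ.map Prod.fst = μ₀) (h₁ : γ.map Prod.snd = μ₁) (hμ₀ : μ₀ s = 1) (hμ₁ : μ₁ t = 1) :
    ∀ᵐ q ∂γ, q ∈ s ×ˢ t := by
  have hs' : ∀ᵐ x ∂γ.map Prod.fst, x ∈ s := by
    rw [h₀, ae_mem_iff_measure_eq hs.nullMeasurableSet, hμ₀, measure_univ]
  have ht' : ∀ᵐ x ∂γ.map Prod.snd, x ∈ t := by
    rw [h₁, ae_mem_iff_measure_eq ht.nullMeasurableSet, hμ₁, measure_univ]
  filter_upwards [(ae_map_iff measurable_fst.aemeasurable hs).1 hs',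
    (ae_map_iff measurable_snd.aemeasurable ht).1 ht'] with q hq₁ hq₂
  exact ⟨hq₁, hq₂⟩

lemma Continuous.memLp_of_ae_mem_isCompact [TopologicalSpace α] [OpensMeasurableSpace α]
    {μ : Measure α} [IsFiniteMeasure μ] {f : α → ℝ} (hf : Continuous f) {T : Set α}
    (hT : IsCompact T) (hμT : ∀ᵐ a ∂μ, a ∈ T) (p : ENNReal) : MemLp f p μ := by
  obtain ⟨C, hC⟩ := hT.exists_bound_of_continuousOn hf.continuousOn
  exact MemLp.of_bound hf.aestronglyMeasurable C (hμT.mono hC)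

lemma integral_le_sqrt_integral_sq {μ : Measure α} [IsProbabilityMeasure μ] {f : α → ℝ}
    (hf : MemLp f 2 μ) : ∫ a, f a ∂μ ≤ Real.sqrt (∫ a, f a ^ 2 ∂μ) := by
  have h := ProbabilityTheory.variance_nonneg f μ
  rw [ProbabilityTheory.variance_eq_sub hf] at h
  exact (le_abs_self _).trans (Real.abs_le_sqrt (by simpa using h))

end Measures

/-- The integral of `exp S` stays above `exp (-B)`: this is where the factor `exp (2 * B)` comes
from. -/
lemma exists_hasDerivAt_log_integral_exp_le {α : Type*} [MeasurableSpace α] {μ : Measure α}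
    [IsProbabilityMeasure μ] {S S' : ℝ → α → ℝ} {B : ℝ} {bound : α → ℝ}
    (hS_meas : ∀ t, AEStronglyMeasurable (S t) μ) (hS'_meas : ∀ t, AEStronglyMeasurable (S' t) μ)
    (hSB : ∀ t a, |S t a| ≤ B) (hS' : ∀ t a, HasDerivAt (S · a) (S' t a) t)
    (hS'_le : ∀ t a, |S' t a| ≤ bound a) (hbound : Integrable bound μ) (t : ℝ) :
    ∃ D, HasDerivAt (fun s => Real.log (∫ a, Real.exp (S s a) ∂μ)) D t ∧
      |D| ≤ Real.exp (2 * B) * ∫ a, bound a ∂μ := by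
  have hexp_meas : ∀ s, AEStronglyMeasurable (fun a => Real.exp (S s a)) μ :=
    fun s => Real.continuous_exp.comp_aestronglyMeasurable (hS_meas s)
  have hexp_le : ∀ s a, Real.exp (S s a) ≤ Real.exp B :=
    fun s a => Real.exp_le_exp.2 (le_of_abs_le (hSB s a))
  have hexp_int : Integrable (fun a => Real.exp (S t a)) μ :=
    (integrable_const (Real.exp B)).mono' (hexp_meas t)
      (ae_of_all _ fun a => by simpa [abs_of_pos (Real.exp_pos _)] using hexp_le t a)
  have hI_ge : Real.exp (-B) ≤ ∫ a, Real.exp (S t a) ∂μ := by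
    simpa using integral_mono (integrable_const _) hexp_int
      fun a => Real.exp_le_exp.2 (neg_le_of_abs_le (hSB t a))
  have hI_pos : 0 < ∫ a, Real.exp (S t a) ∂μ := (Real.exp_pos _).trans_le hI_ge
  have hderiv_le : ∀ s a, ‖Real.exp (S s a) * S' s a‖ ≤ Real.exp B * bound a := fun s a => by
    rw [Real.norm_eq_abs, abs_mul, abs_of_pos (Real.exp_pos _)]
    exact mul_le_mul (hexp_le s a) (hS'_le s a) (abs_nonneg _) (Real.exp_pos B).le
  obtain ⟨-, hI⟩ := hasDerivAt_integral_of_dominated_loc_of_deriv_le Filter.univ_mem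
    (Filter.Eventually.of_forall hexp_meas) hexp_int
    ((hexp_meas t).mul (hS'_meas t)) (ae_of_all _ fun a s _ => hderiv_le s a)
    (hbound.const_mul _) (ae_of_all _ fun a s _ => (hS' s a).exp)
  refine ⟨_, hI.log hI_pos.ne', ?_⟩
  have hI'_le : |∫ a, Real.exp (S t a) * S' t a ∂μ| ≤ Real.exp B * ∫ a, bound a ∂μ := by
    rw [← integral_const_mul]
    exact norm_integral_le_of_norm_le (hbound.const_mul _) (ae_of_all _ (hderiv_le t))
  rw [abs_div, abs_of_pos hI_pos, div_le_iff₀ hI_pos]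
  calc |∫ a, Real.exp (S t a) * S' t a ∂μ| ≤ Real.exp B * ∫ a, bound a ∂μ := hI'_le
    _ = Real.exp (2 * B) * (∫ a, bound a ∂μ) * Real.exp (-B) := by
      rw [mul_right_comm, ← Real.exp_add]; ring_nf
    _ ≤ Real.exp (2 * B) * (∫ a, bound a ∂μ) * ∫ a, Real.exp (S t a) ∂μ := by
      have : 0 ≤ ∫ a, bound a ∂μ := integral_nonneg fun a => (abs_nonneg _).trans (hS'_le t a)
      gcongr

section Exponent

variable {ι V : Type*}

def schrodingerExponent (g : (ι → V) → ℝ) (ψ : ι → V → ℝ) (s : Finset ι) (x : ι → V) : ℝ :=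
  ∑ j ∈ s, ψ j (x j) - g x

variable {g : (ι → V) → ℝ} {ψ : ι → V → ℝ} {s : Finset ι} {K : ℝ}

lemma abs_schrodingerExponent_le (hgK : ∀ x, |g x| ≤ K) (hψK : ∀ j y, |ψ j y| ≤ K)
    (x : ι → V) : |schrodingerExponent g ψ s x| ≤ (s.card + 1) * K := by
  have hsum : |∑ j ∈ s, ψ j (x j)| ≤ s.card * K := by
    simpa using (Finset.abs_sum_le_sum_abs _ _).trans
      (Finset.sum_le_card_nsmul s _ K fun j _ => hψK j (x j))
  calc |schrodingerExponent g ψ s x| ≤ |∑ j ∈ s, ψ j (x j)| + |g x| := abs_sub _ _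
    _ ≤ (s.card + 1) * K := by linarith [hgK x]

variable [Fintype ι] [NormedAddCommGroup V] [NormedSpace ℝ V]

lemma contDiff_schrodingerExponent {n : WithTop ℕ∞} (hg : ContDiff ℝ n g)
    (hψ : ∀ j, ContDiff ℝ n (ψ j)) : ContDiff ℝ n (schrodingerExponent g ψ s) :=
  (ContDiff.sum fun j _ => (hψ j).comp (contDiff_apply ℝ V j)).sub hg

lemma norm_fderiv_schrodingerExponent_le (hg : Differentiable ℝ g)
    (hψ : ∀ j, Differentiable ℝ (ψ j)) (hg'K : ∀ x, ‖fderiv ℝ g x‖ ≤ K)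
    (hψ'K : ∀ j y, ‖fderiv ℝ (ψ j) y‖ ≤ K) (x : ι → V) :
    ‖fderiv ℝ (schrodingerExponent g ψ s) x‖ ≤ (s.card + 1) * K := by
  set A : ι → (ι → V) →L[ℝ] ℝ := fun j => (fderiv ℝ (ψ j) (x j)).comp (ContinuousLinearMap.proj j)
  have hA : ∀ j, HasFDerivAt (fun y : ι → V => ψ j (y j)) (A j) x := fun j =>
    (hψ j (x j)).hasFDerivAt.comp x (hasFDerivAt_apply j x)
  have hderiv : HasFDerivAt (schrodingerExponent g ψ s) (∑ j ∈ s, A j - fderiv ℝ g x) x :=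
    (HasFDerivAt.fun_sum fun j _ => hA j).sub (hg x).hasFDerivAt
  have hK : 0 ≤ K := (norm_nonneg _).trans (hg'K x)
  have hproj : ∀ j, ‖(ContinuousLinearMap.proj j : (ι → V) →L[ℝ] V)‖ ≤ 1 := fun j =>
    ContinuousLinearMap.opNorm_le_bound _ zero_le_one fun y => by
      simpa using norm_le_pi_norm y j
  have hAK : ∀ j, ‖A j‖ ≤ K := fun j =>
    calc ‖A j‖ ≤ ‖fderiv ℝ (ψ j) (x j)‖ * ‖(ContinuousLinearMap.proj j : (ι → V) →L[ℝ] V)‖ :=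
          ContinuousLinearMap.opNorm_comp_le _ _
      _ ≤ K * 1 := mul_le_mul (hψ'K j (x j)) (hproj j) (norm_nonneg _) hK
      _ = K := mul_one K
  have hsum : ‖∑ j ∈ s, A j‖ ≤ s.card * K := by
    simpa using (norm_sum_le s A).trans (Finset.sum_le_card_nsmul s _ K fun j _ => hAK j)
  rw [hderiv.fderiv]
  linarith [norm_sub_le (∑ j ∈ s, A j) (fderiv ℝ g x), hg'K x]

end Exponent

lemma hasDerivAt_update_interpolation {ι V : Type*} [DecidableEq ι] [NormedAddCommGroup V]
    [NormedSpace ℝ V] (z : ι → V × V) (i : ι) (xi : V) (t : ℝ) :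
    HasDerivAt (fun s : ℝ => Function.update (fun j => (1 - s) • (z j).1 + s • (z j).2) i xi)
      (Function.update (fun j => (z j).2 - (z j).1) i 0) t := by
  refine hasDerivAt_pi.2 fun j => ?_
  rcases eq_or_ne j i with rfl | hj
  · simpa using hasDerivAt_const t xi
  · simp only [Function.update_of_ne hj]
    convert AffineMap.hasDerivAt_lineMap (a := (z j).1) (b := (z j).2) (x := t) using 1
    funext s
    rw [AffineMap.lineMap_apply_module]

lemma norm_update_zero_le_sum {ι V : Type*} [Fintype ι] [DecidableEq ι] [NormedAddCommGroup V]
    (f : ι → V) (i : ι) : ‖Function.update f i 0‖ ≤ ∑ j, ‖f j‖ := by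
  refine (pi_norm_le_iff_of_nonneg (by positivity)).2 fun j => ?_
  rcases eq_or_ne j i with rfl | hj
  · simpa using Finset.sum_nonneg fun j _ => norm_nonneg (f j)
  · simpa [Function.update_of_ne hj] using
      Finset.single_le_sum (fun j _ => norm_nonneg (f j)) (Finset.mem_univ j)

lemma integral_sum_norm_sub_le_sqrt_transportCost {N : ℕ} {V : Type*} [NormedAddCommGroup V]
    [MeasurableSpace V] {γ : Fin N → Measure (V × V)} [∀ j, IsProbabilityMeasure (γ j)]
    (hγ : ∀ j, MemLp (fun q : V × V => ‖q.2 - q.1‖) 2 (γ j)) :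
    Integrable (fun z : Fin N → V × V => ∑ j, ‖(z j).2 - (z j).1‖) (Measure.pi γ) ∧
      ∫ z, ∑ j, ‖(z j).2 - (z j).1‖ ∂Measure.pi γ ≤ N * Real.sqrt (transportCost γ) := by
  have hint : ∀ j, Integrable (fun q : V × V => ‖q.2 - q.1‖) (γ j) :=
    fun j => (hγ j).integrable one_le_two
  have hle : ∀ j, ∫ q, ‖q.2 - q.1‖ ∂γ j ≤ Real.sqrt (transportCost γ) := fun j =>
    (integral_le_sqrt_integral_sq (hγ j)).trans <| Real.sqrt_le_sqrt <|
      Finset.single_le_sum (f := fun k => ∫ q, ‖q.2 - q.1‖ ^ 2 ∂γ k)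
        (fun k _ => integral_nonneg fun q => sq_nonneg _) (Finset.mem_univ j)
  have hint_pi : ∀ j, Integrable (fun z : Fin N → V × V => ‖(z j).2 - (z j).1‖) (Measure.pi γ) :=
    fun j => integrable_comp_eval (μ := γ) (f := fun q : V × V => ‖q.2 - q.1‖) (hint j)
  refine ⟨integrable_finsetSum _ fun j _ => hint_pi j, ?_⟩
  rw [integral_finsetSum _ fun j _ => hint_pi j]
  calc ∑ j, ∫ z, ‖(z j).2 - (z j).1‖ ∂Measure.pi γ = ∑ j, ∫ q, ‖q.2 - q.1‖ ∂γ j :=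
        Finset.sum_congr rfl fun j _ =>
          integral_comp_eval (μ := γ) (f := fun q : V × V => ‖q.2 - q.1‖)
            (hint j).aestronglyMeasurable
    _ ≤ ∑ _j : Fin N, Real.sqrt (transportCost γ) := Finset.sum_le_sum fun j _ => hle j
    _ = N * Real.sqrt (transportCost γ) := by simp

section Schrodinger

variable {N d : ℕ}

local notation "E" => EuclideanSpace ℝ (Fin d)

lemma schrodingerG_eq (c : (Fin N → E) → ℝ) (γ : Fin N → Measure (E × E)) (φ : Fin N → E → ℝ)
    (i : Fin N) (t : ℝ) (xi : E) :
    schrodingerG c γ φ i t xi = φ i xi + Real.log (∫ z, Real.exp (schrodingerExponent c φ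
      (Finset.univ.erase i) (Function.update (fun j => (1 - t) • (z j).1 + t • (z j).2) i xi))
        ∂Measure.pi γ) := by
  refine congrArg _ (congrArg _ (integral_congr_ae (ae_of_all _ fun z => ?_)))
  refine congrArg Real.exp (congrArg (· - _) (Finset.sum_congr rfl fun j hj => ?_))
  rw [Function.update_of_ne (Finset.ne_of_mem_erase hj)]

lemma exists_hasDerivAt_schrodingerG_le {g : (Fin N → E) → ℝ} {ψ : Fin N → E → ℝ} {K : ℝ}
    (hg : ContDiff ℝ 1 g) (hgK : ∀ x, |g x| ≤ K) (hg'K : ∀ x, ‖fderiv ℝ g x‖ ≤ K)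
    (hψ : ∀ j, ContDiff ℝ 1 (ψ j)) (hψK : ∀ j y, |ψ j y| ≤ K)
    (hψ'K : ∀ j y, ‖fderiv ℝ (ψ j) y‖ ≤ K)
    {γ : Fin N → Measure (E × E)} [∀ j, IsProbabilityMeasure (γ j)]
    (hγ : ∀ j, MemLp (fun q : E × E => ‖q.2 - q.1‖) 2 (γ j)) (i : Fin N) (xi : E) (t : ℝ) :
    ∃ D, HasDerivAt (fun s => schrodingerG g γ ψ i s xi) D t ∧
      |D| ≤ N ^ 2 * K * Real.exp (2 * (N * K)) * Real.sqrt (transportCost γ) := by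
  set F := schrodingerExponent g ψ (Finset.univ.erase i)
  set u : ℝ → (Fin N → E × E) → Fin N → E :=
    fun s z => Function.update (fun j => (1 - s) • (z j).1 + s • (z j).2) i xi
  set v : (Fin N → E × E) → Fin N → E := fun z => Function.update (fun j => (z j).2 - (z j).1) i 0
  have hcard : ((Finset.univ.erase i).card + 1 : ℝ) = N := by
    exact_mod_cast (Finset.card_erase_add_one (Finset.mem_univ i)).trans (Finset.card_fin N)
  have hK : 0 ≤ K := (abs_nonneg _).trans (hgK 0)
  have hF : ContDiff ℝ 1 F := contDiff_schrodingerExponent hg hψ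
  have hFB : ∀ x, |F x| ≤ N * K := fun x => hcard ▸ abs_schrodingerExponent_le hgK hψK x
  have hF'L : ∀ x, ‖fderiv ℝ F x‖ ≤ N * K := fun x =>
    hcard ▸ norm_fderiv_schrodingerExponent_le (hg.differentiable one_ne_zero)
      (fun j => (hψ j).differentiable one_ne_zero) hg'K hψ'K x
  have hu_cont : ∀ s, Continuous (u s) := fun s =>
    (continuous_pi fun j => by fun_prop).update i continuous_const
  have hv_cont : Continuous v := (continuous_pi fun j => by fun_prop).update i continuous_const
  have hS'_le : ∀ s z, |fderiv ℝ F (u s z) (v z)| ≤ N * K * ∑ j, ‖(z j).2 - (z j).1‖ :=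
    fun s z => ((fderiv ℝ F (u s z)).le_opNorm (v z)).trans <|
      mul_le_mul (hF'L _) (norm_update_zero_le_sum _ i) (norm_nonneg _) (by positivity)
  obtain ⟨hint, hint_le⟩ := integral_sum_norm_sub_le_sqrt_transportCost hγ
  obtain ⟨D, hD, hD_le⟩ := exists_hasDerivAt_log_integral_exp_le (μ := Measure.pi γ)
    (fun s => (hF.continuous.comp (hu_cont s)).aestronglyMeasurable)
    (fun s => (((hF.continuous_fderiv one_ne_zero).comp (hu_cont s)).clm_apply
      hv_cont).aestronglyMeasurable)
    (fun s z => hFB (u s z))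
    (fun s z => (hF.differentiable one_ne_zero _).hasFDerivAt.comp_hasDerivAt s
      (hasDerivAt_update_interpolation z i xi s))
    hS'_le (hint.const_mul _) t
  refine ⟨D, ?_, ?_⟩
  · rw [funext fun s => schrodingerG_eq g γ ψ i s xi]
    exact hD.const_add (ψ i xi)
  · calc |D| ≤ Real.exp (2 * (N * K)) * ∫ z, N * K * ∑ j, ‖(z j).2 - (z j).1‖ ∂Measure.pi γ :=
          hD_le
      _ ≤ Real.exp (2 * (N * K)) * (N * K * (N * Real.sqrt (transportCost γ))) := by
          rw [integral_const_mul]; gcongr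
      _ = N ^ 2 * K * Real.exp (2 * (N * K)) * Real.sqrt (transportCost γ) := by ring

lemma schrodingerG_eq_of_eqOn {X : Fin N → Set E} (hX : ∀ j, Convex ℝ (X j))
    {c g : (Fin N → E) → ℝ} {φ ψ : Fin N → E → ℝ} (hcg : EqOn c g (univ.pi X))
    (hφψ : ∀ j, EqOn (φ j) (ψ j) (X j)) {γ : Fin N → Measure (E × E)}
    [∀ j, IsProbabilityMeasure (γ j)] (hγ : ∀ j, ∀ᵐ q ∂γ j, q ∈ X j ×ˢ X j)
    {i : Fin N} {xi : E} (hxi : xi ∈ X i) {t : ℝ} (ht : t ∈ Icc (0 : ℝ) 1) :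
    schrodingerG c γ φ i t xi = schrodingerG g γ ψ i t xi := by
  have hmem : ∀ᵐ z ∂Measure.pi γ,
      Function.update (fun j => (1 - t) • (z j).1 + t • (z j).2) i xi ∈ univ.pi X := by
    filter_upwards [ae_all_iff.2 fun j =>
      (measurePreserving_eval γ j).quasiMeasurePreserving.ae (hγ j)] with z hz j _
    rcases eq_or_ne j i with rfl | hj
    · simpa using hxi
    · rw [Function.update_of_ne hj]
      exact hX j (hz j).1 (hz j).2 (by linarith [ht.2]) ht.1 (by ring)
  rw [schrodingerG_eq, schrodingerG_eq, hφψ i hxi]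
  refine congrArg _ (congrArg _ (integral_congr_ae (hmem.mono fun z hz => ?_)))
  simp only [schrodingerExponent, hcg hz]
  exact congrArg (fun r => Real.exp (r - _))
    (Finset.sum_congr rfl fun j _ => hφψ j (hz j (mem_univ j)))

end Schrodinger

theorem schrodingerG_time_derivative_bound_general
    (N d : ℕ)
    (X : Fin N → Set (EuclideanSpace ℝ (Fin d)))
    (hXcpt : ∀ i, IsCompact (X i)) (hXcvx : ∀ i, Convex ℝ (X i))
    (M : ℝ) :
    ∃ C > (0 : ℝ), ∀ c : (Fin N → EuclideanSpace ℝ (Fin d)) → ℝ,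
      ContDiff ℝ 1 c → CkNormOn 1 (Set.univ.pi X) c ≤ M →
      ∀ φ : Fin N → EuclideanSpace ℝ (Fin d) → ℝ,
        (∀ j, ContDiff ℝ 1 (φ j)) → (∑ j, CkNormOn 1 (X j) (φ j)) ≤ M →
      ∀ μ0 μ1 : Fin N → Measure (EuclideanSpace ℝ (Fin d)),
        (∀ i, IsProbabilityMeasure (μ0 i)) → (∀ i, μ0 i (X i) = 1) →
        (∀ i, IsProbabilityMeasure (μ1 i)) → (∀ i, μ1 i (X i) = 1) →
      ∀ γ : Fin N → Measure (EuclideanSpace ℝ (Fin d) × EuclideanSpace ℝ (Fin d)),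
        (∀ i, IsProbabilityMeasure (γ i)) →
        (∀ i, (γ i).map Prod.fst = μ0 i) → (∀ i, (γ i).map Prod.snd = μ1 i) →
      ∀ i : Fin N, ∀ xi ∈ X i,
        DifferentiableOn ℝ (fun t => schrodingerG c γ φ i t xi) (Set.Icc (0 : ℝ) 1) ∧
        ∀ t ∈ Set.Icc (0 : ℝ) 1,
          |derivWithin (fun t => schrodingerG c γ φ i t xi) (Set.Icc (0 : ℝ) 1) t| ≤
            C * Real.sqrt (transportCost γ) := by
  have hMK : M < |M| + 1 := (le_abs_self M).trans_lt (lt_add_one _)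
  refine ⟨N ^ 2 * (|M| + 1) * Real.exp (2 * (N * (|M| + 1))) + 1, by positivity, ?_⟩
  intro c hc hcM φ hφ hφM μ0 μ1 hμ0 hμ0X hμ1 hμ1X γ hγ hγ0 hγ1 i xi hxi
  obtain ⟨g, hg, hcg, hgK, hg'K⟩ :=
    exists_extension_of_ckNormOn_one_lt (isCompact_univ_pi hXcpt) hc (hcM.trans_lt hMK)
  choose ψ hψ hφψ hψK hψ'K using fun j => exists_extension_of_ckNormOn_one_lt (hXcpt j) (hφ j)
    (((Finset.single_le_sum (f := fun k => CkNormOn 1 (X k) (φ k))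
      (fun k _ => ckNormOn_nonneg) (Finset.mem_univ j)).trans hφM).trans_lt hMK)
  have hsupp : ∀ j, ∀ᵐ q ∂γ j, q ∈ X j ×ˢ X j := fun j =>
    ae_mem_prod_of_map_fst_of_map_snd (hXcpt j).measurableSet (hXcpt j).measurableSet
      (hγ0 j) (hγ1 j) (hμ0X j) (hμ1X j)
  have hG : EqOn (fun t => schrodingerG c γ φ i t xi) (fun t => schrodingerG g γ ψ i t xi)
      (Icc 0 1) := fun t ht => schrodingerG_eq_of_eqOn hXcvx hcg hφψ hsupp hxi ht
  have hderiv := exists_hasDerivAt_schrodingerG_le hg hgK hg'K hψ hψK hψ'K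
    (fun j => (continuous_snd.sub continuous_fst).norm.memLp_of_ae_mem_isCompact
      ((hXcpt j).prod (hXcpt j)) (hsupp j) 2) i xi
  refine ⟨fun t ht => ?_, fun t ht => ?_⟩ <;> obtain ⟨D, hD, hD_le⟩ := hderiv t
  · exact hD.differentiableAt.differentiableWithinAt.congr hG (hG ht)
  · rw [derivWithin_congr hG (hG ht),
      hD.hasDerivWithinAt.derivWithin (uniqueDiffOn_Icc one_pos t ht)]
    exact hD_le.trans (by gcongr; linarith)

/-- Differentiability in `t` of `G_i(φ,t)(x_i)` and a uniform bound on the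
time derivative: there is `C > 0`, depending only on `N`, `‖c‖_{C¹(X)}` and
`Σ_j ‖φ_j‖_{C¹(X_j)}`, such that `|d/dt G_i(φ,t)(x_i)| ≤ C √(cost(γ))`. -/
theorem schrodingerG_time_derivative_bound
    (N d : ℕ) (hN : 2 ≤ N) (hd : 1 ≤ d)
    (X : Fin N → Set (EuclideanSpace ℝ (Fin d)))
    (hXne : ∀ i, (X i).Nonempty) (hXcpt : ∀ i, IsCompact (X i)) (hXcvx : ∀ i, Convex ℝ (X i))
    (M : ℝ) :
    ∃ C > (0 : ℝ), ∀ c : (Fin N → EuclideanSpace ℝ (Fin d)) → ℝ,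
      ContDiff ℝ 1 c → CkNormOn 1 (Set.univ.pi X) c ≤ M →
      ∀ φ : Fin N → EuclideanSpace ℝ (Fin d) → ℝ,
        (∀ j, ContDiff ℝ 1 (φ j)) → (∑ j, CkNormOn 1 (X j) (φ j)) ≤ M →
      ∀ μ0 μ1 : Fin N → Measure (EuclideanSpace ℝ (Fin d)),
        (∀ i, IsProbabilityMeasure (μ0 i)) → (∀ i, μ0 i (X i) = 1) →
        (∀ i, IsProbabilityMeasure (μ1 i)) → (∀ i, μ1 i (X i) = 1) →
      ∀ γ : Fin N → Measure (EuclideanSpace ℝ (Fin d) × EuclideanSpace ℝ (Fin d)),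
        (∀ i, IsProbabilityMeasure (γ i)) →
        (∀ i, (γ i).map Prod.fst = μ0 i) → (∀ i, (γ i).map Prod.snd = μ1 i) →
      ∀ i : Fin N, ∀ xi ∈ X i,
        DifferentiableOn ℝ (fun t => schrodingerG c γ φ i t xi) (Set.Icc (0 : ℝ) 1) ∧
        ∀ t ∈ Set.Icc (0 : ℝ) 1,
          |derivWithin (fun t => schrodingerG c γ φ i t xi) (Set.Icc (0 : ℝ) 1) t| ≤
            C * Real.sqrt (transportCost γ) :=
  schrodingerG_time_derivative_bound_general N d X hXcpt hXcvx M
end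
end

section
/- Let c : X → ℝ be continuous, let φ = (φ_1,…,φ_N) be a solution of the Schrödinger system for (c,(μ_1,…,μ_N)), and let γ be the probability measure on X with density x ↦ exp(Σ_{i=1}^N φ_i(x_i) − c(x)) with respect to μ = μ_1 ⊗ ⋯ ⊗ μ_N. Then γ minimizes γ' ↦ ∫_X c dγ' + H(γ'|μ) over all Borel probability measures γ' on X whose i-th marginal is μ_i for every i, and the minimal value satisfies E(μ_1,…,μ_N) = ∫_X c dγ + H(γ|μ) = Σ_{i=1}^N ∫_{X_i} φ_i dμ_i. -/
open MeasureTheory Set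

noncomputable section

/-- The entropic optimal transport cost: the infimum of `∫ c dγ + H(γ | ⊗_i μ_i)` over all
probability measures `γ` on the product with marginals `μ_i` (plans with infinite relative
entropy, i.e. not absolutely continuous or with non-integrable log-likelihood ratio,
contribute `+∞` and are omitted from the infimum). -/
noncomputable def EOT {N d : ℕ} (c : (Fin N → EuclideanSpace ℝ (Fin d)) → ℝ)
    (μ : Fin N → MeasureTheory.Measure (EuclideanSpace ℝ (Fin d))) : ℝ :=
  sInf {r : ℝ | ∃ γ : MeasureTheory.Measure (Fin N → EuclideanSpace ℝ (Fin d)),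
    MeasureTheory.IsProbabilityMeasure γ ∧ (∀ i, γ.map (fun x => x i) = μ i) ∧
    γ ≪ MeasureTheory.Measure.pi μ ∧
    MeasureTheory.Integrable (MeasureTheory.llr γ (MeasureTheory.Measure.pi μ)) γ ∧
    r = ∫ x, c x ∂γ + ∫ x, MeasureTheory.llr γ (MeasureTheory.Measure.pi μ) x ∂γ}

open scoped ENNReal

/-!
Write `L x = ∑ i, ψ i (x i) - c x` for (measurable, bounded versions `ψ`, `c` of) the
potentials and the cost, and `γ = exp L • μ`. The `i`-th Schrödinger equation says exactly that
for `μ i`-a.e. `t` the slice of `exp L` through `x i = t` has mass one, so `γ` has marginals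
`μ i`. For any plan `ρ` with these marginals,
`∫ c ∂ρ + H(ρ | μ) = H(ρ | γ) + ∫ (c + L) ∂ρ = H(ρ | γ) + ∑ i, ∫ ψ i ∂μ i`,
since `c + L = ∑ i, ψ i (x i)` integrates against `ρ` through its marginals only. Gibbs'
inequality `H(ρ | γ) ≥ 0`, with equality at `ρ = γ`, gives optimality and the value.
-/

section ProductMarginals

variable {ι : Type*} [Fintype ι] [DecidableEq ι] {α : ι → Type*}
  [∀ i, MeasurableSpace (α i)] {μ : ∀ i, Measure (α i)} [∀ i, IsProbabilityMeasure (μ i)]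

theorem measurePreserving_update_eval (i : ι) :
    MeasurePreserving (fun p : (∀ j, α j) × (∀ j, α j) => Function.update p.2 i (p.1 i))
      ((Measure.pi μ).prod (Measure.pi μ)) (Measure.pi μ) := by
  have hmeas : Measurable
      (fun p : (∀ j, α j) × (∀ j, α j) => Function.update p.2 i (p.1 i)) := by fun_prop
  refine ⟨hmeas, (Measure.pi_eq fun s hs => ?_).symm⟩
  have hpre : (fun p : (∀ j, α j) × (∀ j, α j) => Function.update p.2 i (p.1 i)) ⁻¹'
      univ.pi s = (Function.eval i ⁻¹' s i) ×ˢ univ.pi (Function.update s i univ) := by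
    ext ⟨x, y⟩
    simp only [mem_preimage, mem_prod, Function.eval, mem_pi, mem_univ, forall_const]
    refine ⟨fun h => ⟨by simpa using h i, fun j => ?_⟩, fun ⟨hx, hy⟩ j => ?_⟩
    · rcases eq_or_ne j i with rfl | hj
      · simp
      · simpa [hj] using h j
    · rcases eq_or_ne j i with rfl | hj
      · simpa using hx
      · simpa [hj] using hy j
  rw [Measure.map_apply hmeas (.univ_pi hs), hpre, Measure.prod_prod,
    (measurePreserving_eval μ i).measure_preimage (hs i).nullMeasurableSet, Measure.pi_pi]
  simp only [Function.apply_update (fun j => μ j), measure_univ]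
  rw [Finset.prod_update_of_mem (Finset.mem_univ i), one_mul, Finset.sdiff_singleton_eq_erase]
  exact Finset.mul_prod_erase _ (fun j => μ j (s j)) (Finset.mem_univ i)

theorem lintegral_pi_eq_lintegral_lintegral_update (i : ι) {f : (∀ j, α j) → ℝ≥0∞}
    (hf : Measurable f) :
    ∫⁻ x, f x ∂Measure.pi μ =
      ∫⁻ x, ∫⁻ y, f (Function.update y i (x i)) ∂Measure.pi μ ∂Measure.pi μ := by
  have hupdate := measurePreserving_update_eval (μ := μ) i
  rw [← hupdate.lintegral_comp hf]
  exact lintegral_prod _ (hf.comp hupdate.measurable).aemeasurable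

theorem map_eval_withDensity_eq (i : ι) {g : (∀ j, α j) → ℝ≥0∞} (hg : Measurable g)
    (hslice : ∀ᵐ t ∂μ i, ∫⁻ y, g (Function.update y i t) ∂Measure.pi μ = 1) :
    ((Measure.pi μ).withDensity g).map (fun x => x i) = μ i := by
  ext A hA
  have hA' : MeasurableSet ((fun x : ∀ j, α j => x i) ⁻¹' A) := measurable_pi_apply i hA
  have hslice' := (measurePreserving_eval μ i).quasiMeasurePreserving.ae hslice
  rw [Measure.map_apply (measurable_pi_apply i) hA, withDensity_apply _ hA',
    ← lintegral_indicator hA', lintegral_pi_eq_lintegral_lintegral_update i (hg.indicator hA'),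
    ← (measurePreserving_eval μ i).measure_preimage hA.nullMeasurableSet,
    ← lintegral_indicator_one hA']
  refine lintegral_congr_ae ?_
  filter_upwards [hslice'] with x hx
  by_cases hxA : x i ∈ A
  · simpa [indicator_of_mem, hxA] using hx
  · simp [hxA]

end ProductMarginals

theorem integral_sum_comp_eval {ι : Type*} [Fintype ι] {α : ι → Type*}
    [∀ i, MeasurableSpace (α i)] {μ : ∀ i, Measure (α i)} {ρ : Measure (∀ i, α i)}
    (hρ : ∀ i, ρ.map (fun x => x i) = μ i) {ψ : ∀ i, α i → ℝ}
    (hψ : ∀ i, Integrable (ψ i) (μ i)) :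
    ∫ x, ∑ i, ψ i (x i) ∂ρ = ∑ i, ∫ t, ψ i t ∂μ i := by
  have hψ' : ∀ i, Integrable (fun x => ψ i (x i)) ρ := fun i =>
    (integrable_map_measure (hρ i ▸ (hψ i).aestronglyMeasurable)
      (measurable_pi_apply i).aemeasurable).mp (hρ i ▸ hψ i)
  rw [integral_finsetSum _ fun i _ => hψ' i]
  refine Finset.sum_congr rfl fun i _ => ?_
  rw [← hρ i, integral_map (measurable_pi_apply i).aemeasurable
    (hρ i ▸ (hψ i).aestronglyMeasurable)]

section Schrodinger

variable {ι : Type*} [Fintype ι] {α : ι → Type*} [∀ i, MeasurableSpace (α i)]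

def planLogDensity (ψ : ∀ i, α i → ℝ) (c : (∀ i, α i) → ℝ) (x : ∀ i, α i) : ℝ :=
  ∑ i, ψ i (x i) - c x

def schrodingerPlan (μ : ∀ i, Measure (α i)) (ψ : ∀ i, α i → ℝ) (c : (∀ i, α i) → ℝ) :
    Measure (∀ i, α i) :=
  (Measure.pi μ).withDensity fun x => ENNReal.ofReal (Real.exp (planLogDensity ψ c x))

theorem schrodingerPlan_congr_ae {μ : ∀ i, Measure (α i)} [∀ i, SigmaFinite (μ i)]
    {ψ φ : ∀ i, α i → ℝ} {c c' : (∀ i, α i) → ℝ} (hψ : ∀ i, ψ i =ᵐ[μ i] φ i)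
    (hc : c' =ᵐ[Measure.pi μ] c) :
    schrodingerPlan μ ψ c' = schrodingerPlan μ φ c := by
  refine withDensity_congr_ae ?_
  filter_upwards [Measure.ae_eq_pi hψ, hc] with x hx hcx
  simp only [planLogDensity, congrFun hx, hcx]

variable [DecidableEq ι]

structure IsBoundedSchrodingerSolution (μ : ∀ i, Measure (α i)) (c : (∀ i, α i) → ℝ)
    (ψ : ∀ i, α i → ℝ) : Prop where
  measurable_potential : ∀ i, Measurable (ψ i)
  bounded_potential : ∀ i, ∃ C, ∀ t, ‖ψ i t‖ ≤ C
  measurable_cost : Measurable c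
  bounded_cost : ∃ C, ∀ x, ‖c x‖ ≤ C
  ae_eq_neg_log_integral : ∀ i, ∀ᵐ t ∂μ i, ψ i t = -Real.log (∫ y, Real.exp
    ((∑ j ∈ Finset.univ.erase i, ψ j (y j)) - c (Function.update y i t)) ∂Measure.pi μ)

namespace IsBoundedSchrodingerSolution

variable {μ : ∀ i, Measure (α i)} {c : (∀ i, α i) → ℝ} {ψ : ∀ i, α i → ℝ}
  (h : IsBoundedSchrodingerSolution μ c ψ)
include h

theorem measurable_planLogDensity : Measurable (planLogDensity ψ c) :=
  (Finset.measurable_sum _ fun i _ =>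
    (h.measurable_potential i).comp (measurable_pi_apply i)).sub h.measurable_cost

theorem exists_norm_planLogDensity_le : ∃ B, ∀ x, ‖planLogDensity ψ c x‖ ≤ B := by
  choose C hC using h.bounded_potential
  obtain ⟨Cc, hCc⟩ := h.bounded_cost
  refine ⟨∑ i, C i + Cc, fun x => (norm_sub_le _ _).trans (add_le_add ?_ (hCc x))⟩
  exact (norm_sum_le _ _).trans (Finset.sum_le_sum fun i _ => hC i (x i))

theorem integrable_potential (i : ι) (ν : Measure (α i)) [IsFiniteMeasure ν] :
    Integrable (ψ i) ν :=
  have ⟨C, hC⟩ := h.bounded_potential i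
  .of_bound (h.measurable_potential i).aestronglyMeasurable C (ae_of_all _ hC)

theorem integrable_cost (ρ : Measure (∀ i, α i)) [IsFiniteMeasure ρ] : Integrable c ρ :=
  have ⟨C, hC⟩ := h.bounded_cost
  .of_bound h.measurable_cost.aestronglyMeasurable C (ae_of_all _ hC)

theorem integrable_planLogDensity (ρ : Measure (∀ i, α i)) [IsFiniteMeasure ρ] :
    Integrable (planLogDensity ψ c) ρ :=
  have ⟨B, hB⟩ := h.exists_norm_planLogDensity_le
  .of_bound h.measurable_planLogDensity.aestronglyMeasurable B (ae_of_all _ hB)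

theorem integrable_exp_planLogDensity (ρ : Measure (∀ i, α i)) [IsFiniteMeasure ρ] :
    Integrable (fun x => Real.exp (planLogDensity ψ c x)) ρ := by
  obtain ⟨B, hB⟩ := h.exists_norm_planLogDensity_le
  refine .of_bound h.measurable_planLogDensity.exp.aestronglyMeasurable (Real.exp B)
    (ae_of_all _ fun x => ?_)
  rw [Real.norm_of_nonneg (Real.exp_pos _).le]
  exact Real.exp_le_exp.2 (le_of_abs_le (hB x))

variable [∀ i, IsProbabilityMeasure (μ i)]

theorem lintegral_exp_planLogDensity_update (i : ι) :
    ∀ᵐ t ∂μ i, ∫⁻ y, ENNReal.ofReal (Real.exp (planLogDensity ψ c (Function.update y i t)))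
      ∂Measure.pi μ = 1 := by
  filter_upwards [h.ae_eq_neg_log_integral i] with t ht
  have hupdate : Measurable fun y : ∀ j, α j => Function.update y i t := by fun_prop
  have hint : Integrable (fun y => Real.exp (planLogDensity ψ c (Function.update y i t)))
      (Measure.pi μ) :=
    (h.integrable_exp_planLogDensity ((Measure.pi μ).map _)).comp_measurable hupdate
  have hsplit : ∀ y : ∀ j, α j, (∑ j ∈ Finset.univ.erase i, ψ j (y j)) -
      c (Function.update y i t) = -ψ i t + planLogDensity ψ c (Function.update y i t) := by
    intro y
    simp only [planLogDensity, Function.apply_update (fun j => ψ j),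
      Finset.sum_update_of_mem (Finset.mem_univ i), Finset.sdiff_singleton_eq_erase]
    ring
  have hpos := integral_exp_pos hint
  simp_rw [hsplit, Real.exp_add, integral_const_mul] at ht
  rw [Real.log_mul (Real.exp_pos _).ne' hpos.ne', Real.log_exp] at ht
  rw [← ofReal_integral_eq_lintegral_ofReal hint (ae_of_all _ fun _ => (Real.exp_pos _).le),
    Real.eq_one_of_pos_of_log_eq_zero hpos (by linarith), ENNReal.ofReal_one]

theorem map_eval_schrodingerPlan (i : ι) :
    (schrodingerPlan μ ψ c).map (fun x => x i) = μ i :=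
  map_eval_withDensity_eq i h.measurable_planLogDensity.exp.ennreal_ofReal
    (h.lintegral_exp_planLogDensity_update i)

theorem isProbabilityMeasure_schrodingerPlan [Nonempty ι] :
    IsProbabilityMeasure (schrodingerPlan μ ψ c) := by
  obtain ⟨i⟩ := ‹Nonempty ι›
  have := congrArg (fun ν : Measure (α i) => ν univ) (h.map_eval_schrodingerPlan i)
  simp only [Measure.map_apply (measurable_pi_apply i) MeasurableSet.univ, preimage_univ,
    measure_univ] at this
  exact ⟨this⟩

theorem integral_exp_planLogDensity [Nonempty ι] :
    ∫ x, Real.exp (planLogDensity ψ c x) ∂Measure.pi μ = 1 := by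
  have := h.isProbabilityMeasure_schrodingerPlan.measure_univ
  rw [schrodingerPlan, withDensity_apply _ MeasurableSet.univ, setLIntegral_univ] at this
  rw [integral_eq_lintegral_of_nonneg_ae (ae_of_all _ fun _ => (Real.exp_pos _).le)
    h.measurable_planLogDensity.exp.aestronglyMeasurable, this, ENNReal.toReal_one]

theorem llr_schrodingerPlan_ae_eq :
    llr (schrodingerPlan μ ψ c) (Measure.pi μ) =ᵐ[schrodingerPlan μ ψ c] planLogDensity ψ c := by
  filter_upwards [(withDensity_absolutelyContinuous _ _).ae_le (Measure.rnDeriv_withDensity _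
    h.measurable_planLogDensity.exp.ennreal_ofReal)] with x hx
  rw [llr, schrodingerPlan, hx, ENNReal.toReal_ofReal (Real.exp_pos _).le, Real.log_exp]

theorem integral_cost_add_integral_planLogDensity (ρ : Measure (∀ i, α i)) [IsFiniteMeasure ρ]
    (hρ : ∀ i, ρ.map (fun x => x i) = μ i) :
    ∫ x, c x ∂ρ + ∫ x, planLogDensity ψ c x ∂ρ = ∑ i, ∫ t, ψ i t ∂μ i := by
  rw [← integral_add (h.integrable_cost ρ) (h.integrable_planLogDensity ρ),
    ← integral_sum_comp_eval hρ fun i => h.integrable_potential i (μ i)]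
  simp only [planLogDensity, add_sub_cancel]

theorem integral_add_integral_llr_schrodingerPlan [Nonempty ι] :
    ∫ x, c x ∂schrodingerPlan μ ψ c +
        ∫ x, llr (schrodingerPlan μ ψ c) (Measure.pi μ) x ∂schrodingerPlan μ ψ c =
      ∑ i, ∫ t, ψ i t ∂μ i := by
  have := h.isProbabilityMeasure_schrodingerPlan
  rw [integral_congr_ae h.llr_schrodingerPlan_ae_eq]
  exact h.integral_cost_add_integral_planLogDensity _ h.map_eval_schrodingerPlan

/-- The gap is the relative entropy of `ρ` with respect to
`(Measure.pi μ).tilted (planLogDensity ψ c)`, which is `schrodingerPlan μ ψ c`. -/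
theorem sum_integral_potential_le [Nonempty ι] (ρ : Measure (∀ i, α i))
    [IsProbabilityMeasure ρ] (hρ : ∀ i, ρ.map (fun x => x i) = μ i) (hρμ : ρ ≪ Measure.pi μ)
    (hllr : Integrable (llr ρ (Measure.pi μ)) ρ) :
    ∑ i, ∫ t, ψ i t ∂μ i ≤ ∫ x, c x ∂ρ + ∫ x, llr ρ (Measure.pi μ) x ∂ρ := by
  have hexp := h.integrable_exp_planLogDensity (Measure.pi μ)
  have := isProbabilityMeasure_tilted hexp
  have hgibbs := InformationTheory.integral_llr_add_sub_measure_univ_nonneg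
    (hρμ.trans (absolutelyContinuous_tilted hexp))
    (integrable_llr_tilted_right hρμ (h.integrable_planLogDensity ρ) hllr hexp)
  rw [integral_llr_tilted_right hρμ (h.integrable_planLogDensity ρ) hexp hllr,
    h.integral_exp_planLogDensity, Real.log_one] at hgibbs
  simp only [probReal_univ] at hgibbs
  linarith [h.integral_cost_add_integral_planLogDensity ρ hρ]

end IsBoundedSchrodingerSolution

end Schrodinger

theorem ContinuousOn.exists_measurable_bounded_eqOn {α : Type*} [TopologicalSpace α]
    [MeasurableSpace α] [OpensMeasurableSpace α] [T2Space α] {f : α → ℝ} {s : Set α}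
    (hf : ContinuousOn f s) (hs : IsCompact s) :
    ∃ g : α → ℝ, Measurable g ∧ (∃ C, ∀ x, ‖g x‖ ≤ C) ∧ EqOn g f s := by
  classical
  obtain ⟨C, hC⟩ := hs.exists_bound_of_continuousOn hf
  refine ⟨s.piecewise f 0, hf.measurable_piecewise continuousOn_const hs.isClosed.measurableSet,
    ⟨max C 0, fun x => ?_⟩, fun x hx => piecewise_eq_of_mem _ _ _ hx⟩
  by_cases hx : x ∈ s
  · rw [piecewise_eq_of_mem _ _ _ hx]
    exact (hC x hx).trans (le_max_left _ _)
  · simp [piecewise_eq_of_notMem _ _ _ hx]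

theorem IsSchrodingerSolution.exists_isBoundedSchrodingerSolution {N d : ℕ}
    {X : Fin N → Set (EuclideanSpace ℝ (Fin d))} {c : (Fin N → EuclideanSpace ℝ (Fin d)) → ℝ}
    {μ : Fin N → Measure (EuclideanSpace ℝ (Fin d))} [∀ i, IsProbabilityMeasure (μ i)]
    {φ : Fin N → EuclideanSpace ℝ (Fin d) → ℝ} (hφ : IsSchrodingerSolution X c μ φ)
    (hX : ∀ i, IsCompact (X i)) (hc : ContinuousOn c (univ.pi X)) (hμX : ∀ i, μ i (X i) = 1) :
    ∃ ψ c', IsBoundedSchrodingerSolution μ c' ψ ∧ (∀ i, ψ i =ᵐ[μ i] φ i) ∧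
      c' =ᵐ[Measure.pi μ] c := by
  choose ψ hψ hψC hψφ using fun i => (hφ.1 i).exists_measurable_bounded_eqOn (hX i)
  obtain ⟨c', hc', hc'C, hc'c⟩ := hc.exists_measurable_bounded_eqOn (isCompact_univ_pi hX)
  have hXae : ∀ i, ∀ᵐ t ∂μ i, t ∈ X i := fun i =>
    (mem_ae_iff_prob_eq_one (hX i).isClosed.measurableSet).2 (hμX i)
  have hpiae : ∀ᵐ y ∂Measure.pi μ, y ∈ univ.pi X :=
    (mem_ae_iff_prob_eq_one (.univ_pi fun i => (hX i).isClosed.measurableSet)).2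
      (by simp [Measure.pi_pi, hμX])
  refine ⟨ψ, c', ⟨hψ, hψC, hc', hc'C, fun i => ?_⟩, fun i => (hXae i).mono (hψφ i),
    hpiae.mono fun _ hy => hc'c hy⟩
  filter_upwards [hXae i] with t ht
  rw [hψφ i ht, hφ.2 i t ht]
  refine congrArg (fun I => -Real.log I) (integral_congr_ae (hpiae.mono fun y hy => ?_))
  have hyt : Function.update y i t ∈ univ.pi X := (update_mem_pi_iff_of_mem hy).2 fun _ => ht
  simp only [hc'c hyt, Finset.sum_congr rfl fun j _ => hψφ j (hy j (mem_univ j))]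

theorem schrodinger_primal_plan_optimality_general
    (N d : ℕ) (hN : 2 ≤ N)
    (X : Fin N → Set (EuclideanSpace ℝ (Fin d)))
    (hXcpt : ∀ i, IsCompact (X i))
    (c : (Fin N → EuclideanSpace ℝ (Fin d)) → ℝ)
    (hc : ContinuousOn c (Set.univ.pi X))
    (μ : Fin N → Measure (EuclideanSpace ℝ (Fin d)))
    (hμp : ∀ i, IsProbabilityMeasure (μ i)) (hμs : ∀ i, μ i (X i) = 1)
    (φ : Fin N → EuclideanSpace ℝ (Fin d) → ℝ)
    (hφ : IsSchrodingerSolution X c μ φ)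
    (γ : Measure (Fin N → EuclideanSpace ℝ (Fin d)))
    (hγ : γ = (Measure.pi μ).withDensity
      (fun x => ENNReal.ofReal (Real.exp ((∑ i, φ i (x i)) - c x)))) :
    γ ≪ Measure.pi μ ∧
    Integrable (llr γ (Measure.pi μ)) γ ∧
    (∀ γ' : Measure (Fin N → EuclideanSpace ℝ (Fin d)),
      IsProbabilityMeasure γ' → (∀ i, γ'.map (fun x => x i) = μ i) →
      γ' ≪ Measure.pi μ → Integrable (llr γ' (Measure.pi μ)) γ' →
      ∫ x, c x ∂γ + ∫ x, llr γ (Measure.pi μ) x ∂γ ≤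
        ∫ x, c x ∂γ' + ∫ x, llr γ' (Measure.pi μ) x ∂γ') ∧
    EOT c μ = ∫ x, c x ∂γ + ∫ x, llr γ (Measure.pi μ) x ∂γ ∧
    EOT c μ = ∑ i, ∫ xi, φ i xi ∂(μ i) := by
  have : Nonempty (Fin N) := ⟨⟨0, by omega⟩⟩
  obtain ⟨ψ, c', hS, hψφ, hc'c⟩ := hφ.exists_isBoundedSchrodingerSolution hXcpt hc hμs
  have hcost : ∀ ρ, ρ ≪ Measure.pi μ → ∫ x, c x ∂ρ = ∫ x, c' x ∂ρ := fun ρ hρ =>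
    integral_congr_ae (hρ.ae_le hc'c.symm)
  have hval : ∑ i, ∫ t, ψ i t ∂μ i = ∑ i, ∫ xi, φ i xi ∂(μ i) :=
    Finset.sum_congr rfl fun i _ => integral_congr_ae (hψφ i)
  have hγ' : γ = schrodingerPlan μ ψ c' := hγ.trans (schrodingerPlan_congr_ae hψφ hc'c).symm
  have hγ₁ : IsProbabilityMeasure γ := hγ' ▸ hS.isProbabilityMeasure_schrodingerPlan
  have hγ₂ : ∀ i, γ.map (fun x => x i) = μ i := hγ' ▸ hS.map_eval_schrodingerPlan
  have hγ₃ : γ ≪ Measure.pi μ := hγ' ▸ withDensity_absolutelyContinuous _ _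
  have hγ₄ : Integrable (llr γ (Measure.pi μ)) γ := by
    subst hγ'
    exact (hS.integrable_planLogDensity _).congr hS.llr_schrodingerPlan_ae_eq.symm
  have hγval : ∫ x, c x ∂γ + ∫ x, llr γ (Measure.pi μ) x ∂γ = ∑ i, ∫ xi, φ i xi ∂(μ i) := by
    rw [hcost γ hγ₃, hγ', hS.integral_add_integral_llr_schrodingerPlan, hval]
  have hle : ∀ ρ : Measure (Fin N → EuclideanSpace ℝ (Fin d)), IsProbabilityMeasure ρ →
      (∀ i, ρ.map (fun x => x i) = μ i) → ρ ≪ Measure.pi μ →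
      Integrable (llr ρ (Measure.pi μ)) ρ →
      ∑ i, ∫ xi, φ i xi ∂(μ i) ≤ ∫ x, c x ∂ρ + ∫ x, llr ρ (Measure.pi μ) x ∂ρ := by
    intro ρ _ hρ hρμ hρllr
    rw [← hval, hcost ρ hρμ]
    exact hS.sum_integral_potential_le ρ hρ hρμ hρllr
  have hEOT : EOT c μ = ∑ i, ∫ xi, φ i xi ∂(μ i) :=
    IsLeast.csInf_eq ⟨⟨γ, hγ₁, hγ₂, hγ₃, hγ₄, hγval.symm⟩,
      by rintro r ⟨ρ, hρ₁, hρ₂, hρ₃, hρ₄, rfl⟩; exact hle ρ hρ₁ hρ₂ hρ₃ hρ₄⟩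
  exact ⟨hγ₃, hγ₄, fun ρ h₁ h₂ h₃ h₄ => hγval ▸ hle ρ h₁ h₂ h₃ h₄, hEOT.trans hγval.symm, hEOT⟩

/-- The plan `γ = exp(Σ_i φ_i(x_i) − c(x)) · μ` built from a solution of
the Schrödinger system is optimal for the entropic optimal transport problem: it has finite
relative entropy with respect to `μ`, its cost-plus-entropy value is minimal among all
admissible plans, and `E(μ_1,…,μ_N) = ∫ c dγ + H(γ|μ) = Σ_i ∫ φ_i dμ_i`. -/
theorem schrodinger_primal_plan_optimality
    (N d : ℕ) (hN : 2 ≤ N) (hd : 1 ≤ d)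
    (X : Fin N → Set (EuclideanSpace ℝ (Fin d)))
    (hXne : ∀ i, (X i).Nonempty) (hXcpt : ∀ i, IsCompact (X i)) (hXcvx : ∀ i, Convex ℝ (X i))
    (c : (Fin N → EuclideanSpace ℝ (Fin d)) → ℝ)
    (hc : ContinuousOn c (Set.univ.pi X))
    (μ : Fin N → Measure (EuclideanSpace ℝ (Fin d)))
    (hμp : ∀ i, IsProbabilityMeasure (μ i)) (hμs : ∀ i, μ i (X i) = 1)
    (φ : Fin N → EuclideanSpace ℝ (Fin d) → ℝ)
    (hφ : IsSchrodingerSolution X c μ φ)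
    (γ : Measure (Fin N → EuclideanSpace ℝ (Fin d)))
    (hγ : γ = (Measure.pi μ).withDensity
      (fun x => ENNReal.ofReal (Real.exp ((∑ i, φ i (x i)) - c x)))) :
    γ ≪ Measure.pi μ ∧
    Integrable (llr γ (Measure.pi μ)) γ ∧
    (∀ γ' : Measure (Fin N → EuclideanSpace ℝ (Fin d)),
      IsProbabilityMeasure γ' → (∀ i, γ'.map (fun x => x i) = μ i) →
      γ' ≪ Measure.pi μ → Integrable (llr γ' (Measure.pi μ)) γ' →
      ∫ x, c x ∂γ + ∫ x, llr γ (Measure.pi μ) x ∂γ ≤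
        ∫ x, c x ∂γ' + ∫ x, llr γ' (Measure.pi μ) x ∂γ') ∧
    EOT c μ = ∫ x, c x ∂γ + ∫ x, llr γ (Measure.pi μ) x ∂γ ∧
    EOT c μ = ∑ i, ∫ xi, φ i xi ∂(μ i) :=
  schrodinger_primal_plan_optimality_general N d hN X hXcpt c hc μ hμp hμs φ hφ γ hγ
end
end
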